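/- arXiv:2309.00823 — 6 statements merged into one kernel-verified Lean document; each statement's English description precedes it below -/
import Mathlib

section
/- The symmetrizer s̃ := Σ_{w∈Σ_n} t^{ℓ(w)} T_w in the Hecke algebra H_n(t) satisfies s̃² = [n]_{t²}! · s̃, where [k]_s = (1-s^k)/(1-s) and [k]_s! = [k]_s [k-1]_s ··· [1]_s. Consequently, if [n]_{t²}! is invertible, then s := s̃/[n]_{t²}! is an idempotent. -/
/-- The number of inversions of a permutation of `Fin n`, which equals its Coxeter length. -/
def invLen {n : ℕ} (w : Equiv.Perm (Fin n)) : ℕ :=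
  ((Finset.univ : Finset (Fin n × Fin n)).filter (fun p => p.1 < p.2 ∧ w p.2 < w p.1)).card

/-- The `s`-factorial `[n]_s! = ∏_{k=1}^n [k]_s`, where `[k]_s = 1 + s + ⋯ + s^{k-1}`. -/
def qFactorial {K : Type*} [Field K] (n : ℕ) (s : K) : K :=
  ∏ k ∈ Finset.range n, ∑ j ∈ Finset.range (k + 1), s ^ j

/-! Pairing each `w` having `ℓ(sᵢ w) > ℓ(w)` with `sᵢ w` factors `s̃ = (1 + t Tᵢ) Xᵢ`, and the
quadratic relation gives `Tᵢ (1 + t Tᵢ) = t (1 + t Tᵢ)`; hence `Tᵢ s̃ = t s̃`, and by induction on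
the length `T_w s̃ = t^{ℓ(w)} s̃`. Therefore `s̃² = (∑_w t^{2ℓ(w)}) s̃`, and `∑_w q^{ℓ(w)} = [n]_q!`:
a permutation of `n + 1` letters is a permutation of `n` letters with the value `p` of its first
letter inserted, and that first letter contributes exactly `p` inversions. -/

open Finset Equiv

section Inversions

variable {n : ℕ}

lemma invLen_one : invLen (1 : Perm (Fin n)) = 0 := by
  rw [invLen, card_eq_zero, filter_eq_empty_iff]
  exact fun _ _ h => lt_asymm h.1 h.2

lemma invLen_swap_mul_of_lt {a b : Fin n} (hab : (b : ℕ) = a + 1) {w : Perm (Fin n)}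
    (h : w⁻¹ a < w⁻¹ b) : invLen (swap a b * w) = invLen w + 1 := by
  have hnew : (w⁻¹ a, w⁻¹ b) ∉
      univ.filter (fun p : Fin n × Fin n => p.1 < p.2 ∧ w p.2 < w p.1) := by
    simp only [mem_filter, mem_univ, true_and, Perm.coe_inv, apply_symm_apply, not_and,
      Fin.lt_def]
    omega
  have hinv : univ.filter
      (fun p : Fin n × Fin n => p.1 < p.2 ∧ (swap a b * w) p.2 < (swap a b * w) p.1) =
      insert (w⁻¹ a, w⁻¹ b) (univ.filter fun p => p.1 < p.2 ∧ w p.2 < w p.1) := by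
    ext ⟨x, y⟩
    have hab' : w x = a → w y = b → x < y := by
      rintro rfl rfl; simpa using h
    have hba : w x = b → w y = a → ¬ x < y := by
      rintro rfl rfl; simpa using h.le
    have hinj : w x = w y → x = y := fun e => w.injective e
    rw [mem_insert, mem_filter, mem_filter]
    simp only [mem_univ, true_and, Prod.mk.injEq, Perm.mul_apply, Perm.eq_inv_iff_eq]
    -- swapping the adjacent values `a`, `b` changes the relative order of no other pair
    generalize w x = u, w y = v at *
    rw [swap_apply_def, swap_apply_def]
    simp only [Fin.lt_def, Fin.ext_iff] at *
    split_ifs <;> omega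
  rw [invLen, hinv, card_insert_of_notMem hnew, invLen]

lemma exists_descent {w : Perm (Fin n)} (hw : w ≠ 1) :
    ∃ i, ∃ hi : i + 1 < n, w⁻¹ ⟨i + 1, hi⟩ < w⁻¹ ⟨i, Nat.lt_of_succ_lt hi⟩ := by
  by_contra! h
  apply hw
  cases n with
  | zero => exact Subsingleton.elim _ _
  | succ m =>
    have hmono : StrictMono (fun x => w⁻¹ x) := Fin.strictMono_iff_lt_succ.2 fun i =>
      (h i (by omega)).lt_of_ne (w⁻¹.injective.ne (by simp [Fin.ext_iff]))
    rw [← inv_inv w, show w⁻¹ = 1 from Equiv.ext (congrFun hmono.eq_id), inv_one]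

lemma exists_eq_swap_mul_of_ne_one {w : Perm (Fin n)} (hw : w ≠ 1) :
    ∃ i, ∃ hi : i + 1 < n, ∃ v, w = swap ⟨i, Nat.lt_of_succ_lt hi⟩ ⟨i + 1, hi⟩ * v ∧
      invLen w = invLen v + 1 := by
  obtain ⟨i, hi, hdesc⟩ := exists_descent hw
  set a : Fin n := ⟨i, Nat.lt_of_succ_lt hi⟩
  set b : Fin n := ⟨i + 1, hi⟩
  have hlen := invLen_swap_mul_of_lt (a := a) (b := b) (w := swap a b * w) rfl
    (by simpa [mul_inv_rev, Perm.mul_apply, swap_inv] using hdesc)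
  rw [← mul_assoc, swap_mul_self, one_mul] at hlen
  exact ⟨i, hi, _, by rw [← mul_assoc, swap_mul_self, one_mul], hlen⟩

lemma sum_filter_not_eq_sum_swap_mul {M : Type*} [AddCommMonoid M] {a b : Fin n}
    (hab : a ≠ b) (F : Perm (Fin n) → M) :
    ∑ w ∈ univ.filter (fun w => ¬ w⁻¹ a < w⁻¹ b), F w =
      ∑ w ∈ univ.filter (fun w => w⁻¹ a < w⁻¹ b), F (swap a b * w) := by
  have hswap (w : Perm (Fin n)) :
      (swap a b * w)⁻¹ a = w⁻¹ b ∧ (swap a b * w)⁻¹ b = w⁻¹ a := by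
    simp [mul_inv_rev, Perm.mul_apply, swap_inv]
  refine (sum_nbij' (swap a b * ·) (swap a b * ·) ?_ ?_ ?_ ?_ fun _ _ => rfl).symm
  · intro w hw
    simp only [mem_filter, mem_univ, true_and, hswap, not_lt] at hw ⊢
    exact hw.le
  · intro w hw
    simp only [mem_filter, mem_univ, true_and, hswap, not_lt] at hw ⊢
    exact lt_of_le_of_ne hw (w⁻¹.injective.ne hab.symm)
  all_goals simp [← mul_assoc]

lemma invLen_eq_sum_card (w : Perm (Fin n)) :
    invLen w = ∑ i, #{j | i < j ∧ w j < w i} := by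
  simp only [invLen, card_filter, Fintype.sum_prod_type]

lemma card_filter_apply_lt (w : Perm (Fin n)) (a : Fin n) : #{j | w j < a} = a := by
  rw [card_filter, Equiv.sum_comp w (fun x => if x < a then 1 else 0), ← card_filter,
    filter_gt_eq_Iio, Fin.card_Iio]

lemma card_filter_pos_apply_lt_apply_zero (w : Perm (Fin (n + 1))) :
    #{j | 0 < j ∧ w j < w 0} = w 0 := by
  rw [← card_filter_apply_lt w (w 0)]
  congr 1
  refine filter_congr fun j _ => and_iff_right_of_imp fun h => Fin.pos_iff_ne_zero.2 ?_
  rintro rfl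
  exact lt_irrefl _ h

noncomputable def insertPerm (p : Fin (n + 1)) (e : Perm (Fin n)) : Perm (Fin (n + 1)) :=
  Equiv.ofBijective (Fin.cons p (p.succAbove ∘ e)) <| Finite.injective_iff_bijective.mp <|
    Fin.cons_injective_of_injective (by simp) (p.succAbove_right_injective.comp e.injective)

@[simp] lemma insertPerm_zero (p : Fin (n + 1)) (e : Perm (Fin n)) : insertPerm p e 0 = p := rfl

@[simp] lemma insertPerm_succ (p : Fin (n + 1)) (e : Perm (Fin n)) (i : Fin n) :
    insertPerm p e i.succ = p.succAbove (e i) := rfl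

lemma insertPerm_bijective :
    Function.Bijective fun pe : Fin (n + 1) × Perm (Fin n) => insertPerm pe.1 pe.2 := by
  rw [Fintype.bijective_iff_injective_and_card]
  refine ⟨fun ⟨p, e⟩ ⟨p', e'⟩ h => ?_, by simp [Fintype.card_perm, Nat.factorial_succ]⟩
  have hp : p = p' := by simpa using congr($h 0)
  subst hp
  exact Prod.ext rfl <| Equiv.ext fun i =>
    p.succAbove_right_injective (by simpa using congr($h i.succ))

lemma invLen_insertPerm (p : Fin (n + 1)) (e : Perm (Fin n)) :
    invLen (insertPerm p e) = p + invLen e := by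
  rw [invLen_eq_sum_card, invLen_eq_sum_card, Fin.sum_univ_succ,
    card_filter_pos_apply_lt_apply_zero, insertPerm_zero]
  congr 1
  refine Fintype.sum_congr _ _ fun i => ?_
  rw [Fin.card_filter_univ_succ]
  simp [Fin.succAbove_lt_succAbove_iff]

end Inversions

theorem sum_pow_invLen {K : Type*} [Field K] (n : ℕ) (s : K) :
    ∑ w : Perm (Fin n), s ^ invLen w = qFactorial n s := by
  induction n with
  | zero => simp [qFactorial, invLen_one]
  | succ n ih =>
    rw [← Fintype.sum_bijective _ insertPerm_bijective
      (fun pe => s ^ ((pe.1 : ℕ) + invLen pe.2)) _ fun pe => by rw [invLen_insertPerm],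
      Fintype.sum_prod_type]
    simp only [pow_add, ← mul_sum, ← sum_mul, ih, Fin.sum_univ_eq_sum_range (s ^ ·), qFactorial,
      prod_range_succ, mul_comm]

section Hecke

variable {K : Type*} [Field K] {A : Type*} [Ring A] [Algebra K A]

lemma mul_one_add_smul_of_quadratic {t : K} (ht : t ≠ 0) {x : A}
    (hx : (x - algebraMap K A t) * (x + algebraMap K A t⁻¹) = 0) :
    x * (1 + t • x) = t • (1 + t • x) := by
  rw [Algebra.algebraMap_eq_smul_one, Algebra.algebraMap_eq_smul_one] at hx
  linear_combination (norm := skip) t • hx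
  simp only [mul_add, sub_mul, smul_add, smul_sub, mul_smul_comm, smul_mul_assoc, one_mul,
    mul_one]
  match_scalars <;> field_simp <;> ring

def heckeSymmetrizer {n : ℕ} (t : K) (Tw : Perm (Fin n) → A) : A :=
  ∑ w, t ^ invLen w • Tw w

variable {n : ℕ} (t : K) (Tw : Perm (Fin n) → A)

lemma heckeSymmetrizer_eq_mul {a b : Fin n} (hab : (b : ℕ) = a + 1) {x : A}
    (hx : ∀ w, invLen (swap a b * w) = invLen w + 1 → Tw (swap a b * w) = x * Tw w) :
    heckeSymmetrizer t Tw =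
      (1 + t • x) * ∑ w ∈ univ.filter (fun w => w⁻¹ a < w⁻¹ b), t ^ invLen w • Tw w := by
  have hne : a ≠ b := by rintro rfl; omega
  rw [heckeSymmetrizer, ← sum_filter_add_sum_filter_not univ (fun w => w⁻¹ a < w⁻¹ b),
    sum_filter_not_eq_sum_swap_mul hne, ← sum_add_distrib, mul_sum]
  refine sum_congr rfl fun w hw => ?_
  have hlen := invLen_swap_mul_of_lt hab (mem_filter.1 hw).2
  rw [hlen, hx w hlen, add_mul, one_mul, smul_mul_assoc, mul_smul_comm]
  module

lemma mul_heckeSymmetrizer_of_quadratic (ht : t ≠ 0) {a b : Fin n} (hab : (b : ℕ) = a + 1)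
    {x : A} (hquad : (x - algebraMap K A t) * (x + algebraMap K A t⁻¹) = 0)
    (hx : ∀ w, invLen (swap a b * w) = invLen w + 1 → Tw (swap a b * w) = x * Tw w) :
    x * heckeSymmetrizer t Tw = t • heckeSymmetrizer t Tw := by
  rw [heckeSymmetrizer_eq_mul t Tw hab hx, ← mul_assoc, mul_one_add_smul_of_quadratic ht hquad,
    smul_mul_assoc]

lemma basis_mul_heckeSymmetrizer (ht : t ≠ 0) (T : ℕ → A)
    (hquad : ∀ i, i + 1 < n → (T i - algebraMap K A t) * (T i + algebraMap K A t⁻¹) = 0)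
    (hTw1 : Tw 1 = 1)
    (hTwmul : ∀ (w : Perm (Fin n)) (i : ℕ) (hi : i + 1 < n),
      invLen ((swap (⟨i, Nat.lt_of_succ_lt hi⟩ : Fin n) ⟨i + 1, hi⟩) * w) = invLen w + 1 →
      Tw ((swap (⟨i, Nat.lt_of_succ_lt hi⟩ : Fin n) ⟨i + 1, hi⟩) * w) = T i * Tw w)
    (w : Perm (Fin n)) :
    Tw w * heckeSymmetrizer t Tw = t ^ invLen w • heckeSymmetrizer t Tw := by
  induction hm : invLen w using Nat.strong_induction_on generalizing w with
  | _ m ih =>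
    by_cases hw : w = 1
    · subst hw
      rw [hTw1, one_mul, ← hm, invLen_one, pow_zero, one_smul]
    obtain ⟨i, hi, v, rfl, hlen⟩ := exists_eq_swap_mul_of_ne_one hw
    rw [hTwmul v i hi hlen, mul_assoc, ih _ (by omega) v rfl, mul_smul_comm,
      mul_heckeSymmetrizer_of_quadratic t Tw ht rfl (hquad i hi) (hTwmul · i hi), smul_smul,
      ← pow_succ, ← hlen, hm]

theorem heckeSymmetrizer_mul_self (ht : t ≠ 0) (T : ℕ → A)
    (hquad : ∀ i, i + 1 < n → (T i - algebraMap K A t) * (T i + algebraMap K A t⁻¹) = 0)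
    (hTw1 : Tw 1 = 1)
    (hTwmul : ∀ (w : Perm (Fin n)) (i : ℕ) (hi : i + 1 < n),
      invLen ((swap (⟨i, Nat.lt_of_succ_lt hi⟩ : Fin n) ⟨i + 1, hi⟩) * w) = invLen w + 1 →
      Tw ((swap (⟨i, Nat.lt_of_succ_lt hi⟩ : Fin n) ⟨i + 1, hi⟩) * w) = T i * Tw w) :
    heckeSymmetrizer t Tw * heckeSymmetrizer t Tw =
      qFactorial n (t ^ 2) • heckeSymmetrizer t Tw := by
  calc heckeSymmetrizer t Tw * heckeSymmetrizer t Tw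
      = ∑ w, t ^ invLen w • (Tw w * heckeSymmetrizer t Tw) := by
        simp only [heckeSymmetrizer, sum_mul, smul_mul_assoc]
    _ = ∑ w : Perm (Fin n), (t ^ 2) ^ invLen w • heckeSymmetrizer t Tw := by
        simp only [basis_mul_heckeSymmetrizer t Tw ht T hquad hTw1 hTwmul, smul_smul, ← mul_pow,
          sq]
    _ = qFactorial n (t ^ 2) • heckeSymmetrizer t Tw := by
        rw [← sum_smul, sum_pow_invLen]

end Hecke

/-- In the Hecke algebra `H_n(t)`, the symmetrizer `s̃ = ∑_w t^{ℓ(w)} T_w` satisfies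
`s̃² = [n]_{t²}! ⬝ s̃`; consequently if `[n]_{t²}!` is invertible then `s̃/[n]_{t²}!`
is idempotent. -/
theorem hecke_symmetrizer_idempotent
    {K : Type*} [Field K] {A : Type*} [Ring A] [Algebra K A]
    (n : ℕ) (t : K) (ht : t ≠ 0)
    (T : ℕ → A) (Tw : Equiv.Perm (Fin n) → A)
    (hquad : ∀ i, i + 1 < n →
      (T i - algebraMap K A t) * (T i + algebraMap K A t⁻¹) = 0)
    (hTw1 : Tw 1 = 1)
    (hTwmul : ∀ (w : Equiv.Perm (Fin n)) (i : ℕ) (hi : i + 1 < n),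
      invLen ((Equiv.swap (⟨i, by omega⟩ : Fin n) ⟨i + 1, hi⟩) * w) = invLen w + 1 →
      Tw ((Equiv.swap (⟨i, by omega⟩ : Fin n) ⟨i + 1, hi⟩) * w) = T i * Tw w) :
    (∑ w : Equiv.Perm (Fin n), t ^ invLen w • Tw w) *
        (∑ w : Equiv.Perm (Fin n), t ^ invLen w • Tw w)
      = qFactorial n (t ^ 2) • (∑ w : Equiv.Perm (Fin n), t ^ invLen w • Tw w)
    ∧ ∀ u : K, qFactorial n (t ^ 2) * u = 1 →
        (u • ∑ w : Equiv.Perm (Fin n), t ^ invLen w • Tw w) *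
            (u • ∑ w : Equiv.Perm (Fin n), t ^ invLen w • Tw w)
          = u • ∑ w : Equiv.Perm (Fin n), t ^ invLen w • Tw w := by
  have hsq := heckeSymmetrizer_mul_self t Tw ht T hquad hTw1 hTwmul
  rw [heckeSymmetrizer] at hsq
  refine ⟨hsq, fun u hu => ?_⟩
  rw [smul_mul_smul_comm, hsq, smul_smul]
  congr 1
  linear_combination u * hu
end

section
/- In the GL_n double affine Hecke algebra with generators T_i (1 ≤ i ≤ n-1), X_j^{±1} (1 ≤ j ≤ n), π^{±1}, the elements Y_i := T_i ··· T_{n-1} π^{-1} T_1^{-1} ··· T_{i-1}^{-1} pairwise commute: Y_i Y_j = Y_j Y_i for all i, j. -/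
/-!
By `Y_i = T_i Y_{i+1} T_i` and since `T_k` commutes with `Y_i` for `k > i`, an induction reduces
everything to neighbours, and `Y_i Y_{i+1} = Y_{i+1} Y_i` amounts to `T_i` commuting with
`Y_{i+1} T_i Y_{i+1}`. Moving the two copies of `π⁻¹` together rewrites this element as
`(T_{i+1} ⋯ T_{n-1})(T_i ⋯ T_{n-1}) π⁻² (T_2⁻¹ ⋯ T_i⁻¹)(T_1⁻¹ ⋯ T_i⁻¹)`, and `T_i` passes through
it factor by factor, turning into `T_{n-1}`, then `T_1`, then `T_i` again: by the braid
relations `T_a ⋯ T_b` conjugates `T_j` into `T_{j+1}` for `a ≤ j < b`, and `π²` conjugates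
`T_{n-1}` into `T_1`.
-/

/-- `Y_i := T_i ⋯ T_{n-1} π⁻¹ T_1⁻¹ ⋯ T_{i-1}⁻¹` in the DAHA (1-indexed). -/
def dahaY {A : Type*} [Ring A] (T Tinv : ℕ → A) (πinv : A) (n i : ℕ) : A :=
  ((List.range' i (n - i)).map T).prod * πinv * ((List.range' 1 (i - 1)).map Tinv).prod

section Monoid

variable {M : Type*} [Monoid M]

def orderedProd (f : ℕ → M) (a k : ℕ) : M :=
  ((List.range' a k).map f).prod

lemma orderedProd_succ (f : ℕ → M) (a k : ℕ) :
    orderedProd f a (k + 1) = f a * orderedProd f (a + 1) k := by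
  simp [orderedProd, List.range'_succ]

lemma orderedProd_succ' (f : ℕ → M) (a k : ℕ) :
    orderedProd f a (k + 1) = orderedProd f a k * f (a + k) := by
  simp [orderedProd, List.range'_concat]

lemma orderedProd_comp_succ (f : ℕ → M) (a k : ℕ) :
    orderedProd (fun m => f (m + 1)) a k = orderedProd f (a + 1) k := by
  induction k generalizing a with
  | zero => rfl
  | succ k ih => rw [orderedProd_succ, orderedProd_succ, ih]

lemma semiconjBy_orderedProd {x : M} {f g : ℕ → M} {a k : ℕ}
    (h : ∀ m, a ≤ m → m < a + k → SemiconjBy x (f m) (g m)) :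
    SemiconjBy x (orderedProd f a k) (orderedProd g a k) := by
  induction k generalizing a with
  | zero => exact SemiconjBy.one_right x
  | succ k ih =>
    rw [orderedProd_succ, orderedProd_succ]
    exact (h a le_rfl (by omega)).mul_right (ih fun m h₁ h₂ => h m (by omega) (by omega))

lemma commute_orderedProd {x : M} {f : ℕ → M} {a k : ℕ}
    (h : ∀ m, a ≤ m → m < a + k → Commute x (f m)) : Commute x (orderedProd f a k) :=
  semiconjBy_orderedProd h

lemma semiconjBy_pow_of_forall_semiconjBy_succ {x : M} {f : ℕ → M} {a k : ℕ}
    (h : ∀ m, a ≤ m → m < a + k → SemiconjBy x (f m) (f (m + 1))) :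
    SemiconjBy (x ^ k) (f a) (f (a + k)) := by
  induction k with
  | zero => simp
  | succ k ih =>
    rw [pow_succ']
    exact (h (a + k) (by omega) (by omega)).mul_left (ih fun m h₁ h₂ => h m h₁ (by omega))

lemma Commute.of_mul_eq_one_left {a a' b : M} (h₁ : a * a' = 1) (h₂ : a' * a = 1)
    (h : Commute a b) : Commute a' b :=
  Commute.units_inv_left (u := ⟨a, a', h₁, h₂⟩) h

lemma Commute.mul_mul_of_mul_mul {a b : M} (h : Commute a (b * a * b)) :
    Commute (a * b * a) b :=
  calc a * b * a * b = a * (b * a * b) := by simp only [mul_assoc]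
    _ = b * a * b * a := h.eq
    _ = b * (a * b * a) := by simp only [mul_assoc]

structure BraidRelations (s : ℕ → M) (lo hi : ℕ) : Prop where
  braid : ∀ i, lo ≤ i → i + 1 ≤ hi → s i * s (i + 1) * s i = s (i + 1) * s i * s (i + 1)
  comm : ∀ i j, lo ≤ i → i + 2 ≤ j → j ≤ hi → s i * s j = s j * s i

lemma Units.inv_braid {u v : Mˣ} (h : (u : M) * v * u = v * u * v) :
    (↑u⁻¹ : M) * ↑v⁻¹ * ↑u⁻¹ = ↑v⁻¹ * ↑u⁻¹ * ↑v⁻¹ := by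
  have huv : u * v * u = v * u * v := Units.ext (by simpa using h)
  simpa [mul_inv_rev, mul_assoc] using congrArg (fun w : Mˣ => (↑w⁻¹ : M)) huv

namespace BraidRelations

variable {s : ℕ → M} {lo hi : ℕ}

lemma commute (hs : BraidRelations s lo hi) {i j : ℕ} (h₁ : lo ≤ i) (h₂ : i + 2 ≤ j)
    (h₃ : j ≤ hi) : Commute (s i) (s j) :=
  hs.comm i j h₁ h₂ h₃

lemma of_inverse (hs : BraidRelations s lo hi) {s' : ℕ → M}
    (hinv : ∀ i, lo ≤ i → i ≤ hi → s i * s' i = 1 ∧ s' i * s i = 1) :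
    BraidRelations s' lo hi := by
  let u (i : ℕ) (hi₁ : lo ≤ i) (hi₂ : i ≤ hi) : Mˣ :=
    ⟨s i, s' i, (hinv i hi₁ hi₂).1, (hinv i hi₁ hi₂).2⟩
  refine ⟨fun i h₁ h₂ => ?_, fun i j h₁ h₂ h₃ => ?_⟩
  · exact Units.inv_braid (u := u i h₁ (by omega)) (v := u (i + 1) (by omega) h₂)
      (hs.braid i h₁ h₂)
  · exact Commute.units_inv_right (u := u j (by omega) h₃)
      (Commute.units_inv_left (u := u i h₁ (by omega)) (hs.comm i j h₁ h₂ h₃))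

lemma semiconjBy_orderedProd_succ (hs : BraidRelations s lo hi) {a k j : ℕ} (ha : lo ≤ a)
    (haj : a ≤ j) (hjk : j + 2 ≤ a + k) (hk : a + k ≤ hi + 1) :
    SemiconjBy (orderedProd s a k) (s j) (s (j + 1)) := by
  induction k generalizing a with
  | zero => omega
  | succ k ih =>
    rw [orderedProd_succ]
    rcases haj.eq_or_lt with rfl | haj
    · obtain ⟨k, rfl⟩ : ∃ k', k = k' + 1 := ⟨k - 1, by omega⟩
      rw [orderedProd_succ, ← mul_assoc]
      have hbraid : SemiconjBy (s a * s (a + 1)) (s a) (s (a + 1)) := by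
        rw [SemiconjBy, hs.braid a ha (by omega), mul_assoc]
      have hfar : Commute (orderedProd s (a + 1 + 1) k) (s a) :=
        (commute_orderedProd fun m h₁ h₂ => hs.commute ha (by omega) (by omega)).symm
      exact hbraid.mul_left hfar
    · have hfar : Commute (s a) (s (j + 1)) := hs.commute ha (by omega) (by omega)
      exact SemiconjBy.mul_left hfar
        (ih (a := a + 1) (by omega) (by omega) (by omega) (by omega))

lemma semiconjBy_orderedProd_orderedProd (hs : BraidRelations s lo hi) {a m : ℕ}
    (ha : lo ≤ a) (hm : a + m ≤ hi) :
    SemiconjBy (orderedProd s a (m + 1)) (orderedProd s a m) (orderedProd s (a + 1) m) := by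
  rw [← orderedProd_comp_succ]
  exact semiconjBy_orderedProd fun j h₁ h₂ =>
    hs.semiconjBy_orderedProd_succ ha h₁ (by omega) (by omega)

lemma mul_orderedProd_mul_orderedProd (hs : BraidRelations s lo hi) {a m : ℕ}
    (ha : lo ≤ a) (hm : a + m ≤ hi) :
    s a * (orderedProd s (a + 1) m * orderedProd s a m)
      = orderedProd s (a + 1) m * orderedProd s a m * s (a + m) := by
  calc s a * (orderedProd s (a + 1) m * orderedProd s a m)
      = orderedProd s a (m + 1) * orderedProd s a m := by rw [orderedProd_succ, mul_assoc]
    _ = orderedProd s (a + 1) m * orderedProd s a (m + 1) :=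
      hs.semiconjBy_orderedProd_orderedProd ha hm
    _ = orderedProd s (a + 1) m * orderedProd s a m * s (a + m) := by
      rw [orderedProd_succ', mul_assoc]

end BraidRelations

structure AffineBraidRelations (n : ℕ) (T Tinv : ℕ → M) (π : Mˣ) : Prop where
  T_mul_Tinv : ∀ i, 1 ≤ i → i ≤ n - 1 → T i * Tinv i = 1 ∧ Tinv i * T i = 1
  braid : BraidRelations T 1 (n - 1)
  pi_mul_T : ∀ i, 1 ≤ i → i + 1 ≤ n - 1 → (π : M) * T i = T (i + 1) * π
  pi_pow_mul_T : ∀ i, 1 ≤ i → i ≤ n - 1 → (π : M) ^ n * T i = T i * π ^ n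

namespace AffineBraidRelations

variable {n : ℕ} {T Tinv : ℕ → M} {π : Mˣ}

lemma braid_Tinv (h : AffineBraidRelations n T Tinv π) : BraidRelations Tinv 1 (n - 1) :=
  h.braid.of_inverse h.T_mul_Tinv

lemma commute_Tinv_T (h : AffineBraidRelations n T Tinv π) {x k : ℕ} (hx : 1 ≤ x)
    (hxk : x + 2 ≤ k) (hk : k ≤ n - 1) : Commute (Tinv x) (T k) :=
  (h.braid.commute hx hxk hk).of_mul_eq_one_left (h.T_mul_Tinv x hx (by omega)).1
    (h.T_mul_Tinv x hx (by omega)).2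

lemma semiconjBy_piInv_T (h : AffineBraidRelations n T Tinv π) {m : ℕ} (hm : 1 ≤ m)
    (hmn : m + 1 ≤ n - 1) : SemiconjBy (↑π⁻¹ : M) (T (m + 1)) (T m) :=
  SemiconjBy.units_inv_symm_left (h.pi_mul_T m hm hmn)

lemma semiconjBy_piInv_Tinv (h : AffineBraidRelations n T Tinv π) {m : ℕ} (hm : 1 ≤ m)
    (hmn : m + 1 ≤ n - 1) : SemiconjBy (↑π⁻¹ : M) (Tinv (m + 1)) (Tinv m) :=
  SemiconjBy.units_inv_symm_left <| SemiconjBy.units_inv_right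
    (x := ⟨T m, Tinv m, (h.T_mul_Tinv m hm (by omega)).1, (h.T_mul_Tinv m hm (by omega)).2⟩)
    (y := ⟨T (m + 1), Tinv (m + 1), (h.T_mul_Tinv (m + 1) (by omega) hmn).1,
      (h.T_mul_Tinv (m + 1) (by omega) hmn).2⟩)
    (h.pi_mul_T m hm hmn)

/-- `π^{n-2}` moves `T_1` to `T_{n-1}` while `π^n` fixes `T_1`. -/
lemma semiconjBy_piInv_mul_piInv (h : AffineBraidRelations n T Tinv π) (hn : 2 ≤ n) :
    SemiconjBy (↑π⁻¹ * ↑π⁻¹ : M) (T 1) (T (n - 1)) := by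
  have hshift : SemiconjBy ((π : M) ^ (n - 2)) (T 1) (T (n - 1)) := by
    have := semiconjBy_pow_of_forall_semiconjBy_succ (x := (π : M)) (f := T) (a := 1)
      (k := n - 2) fun m h₁ h₂ => h.pi_mul_T m h₁ (by omega)
    rwa [show 1 + (n - 2) = n - 1 by omega] at this
  have hsq : SemiconjBy (↑(π ^ 2) : M) (T (n - 1)) (T 1) := by
    rw [SemiconjBy, ← Units.mul_left_inj (π ^ (n - 2)), Units.val_pow_eq_pow_val,
      Units.val_pow_eq_pow_val, mul_assoc, ← hshift.eq, ← mul_assoc, ← pow_add, mul_assoc,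
      ← pow_add, show 2 + (n - 2) = n by omega, h.pi_pow_mul_T 1 le_rfl (by omega)]
  simpa [pow_two, mul_inv_rev] using hsq.units_inv_symm_left

end AffineBraidRelations

end Monoid

section DahaY

variable {A : Type*} [Ring A] {n : ℕ} {T Tinv : ℕ → A} {π : Aˣ}

lemma dahaY_eq (T Tinv : ℕ → A) (πinv : A) (n i : ℕ) :
    dahaY T Tinv πinv n i = orderedProd T i (n - i) * πinv * orderedProd Tinv 1 (i - 1) :=
  rfl

namespace AffineBraidRelations

lemma orderedProd_Tinv_mul_T (h : AffineBraidRelations n T Tinv π) {i : ℕ} (hi : 1 ≤ i)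
    (hin : i ≤ n - 1) : orderedProd Tinv 1 i * T i = orderedProd Tinv 1 (i - 1) := by
  obtain ⟨j, rfl⟩ : ∃ j, i = j + 1 := ⟨i - 1, by omega⟩
  rw [orderedProd_succ', add_comm 1 j, mul_assoc, (h.T_mul_Tinv (j + 1) hi hin).2, mul_one,
    Nat.add_sub_cancel]

lemma dahaY_eq_T_mul_dahaY_succ_mul_T (h : AffineBraidRelations n T Tinv π) {i : ℕ}
    (hi : 1 ≤ i) (hin : i + 1 ≤ n) :
    dahaY T Tinv ↑π⁻¹ n i = T i * dahaY T Tinv ↑π⁻¹ n (i + 1) * T i := by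
  have hR : orderedProd T i (n - i) = T i * orderedProd T (i + 1) (n - (i + 1)) := by
    rw [show n - i = n - (i + 1) + 1 by omega, orderedProd_succ]
  rw [dahaY_eq, dahaY_eq, hR, Nat.add_sub_cancel, ← h.orderedProd_Tinv_mul_T hi (by omega)]
  simp only [mul_assoc]

lemma dahaY_succ_eq_Tinv_mul_dahaY_mul_Tinv (h : AffineBraidRelations n T Tinv π) {i : ℕ}
    (hi : 1 ≤ i) (hin : i + 1 ≤ n) :
    dahaY T Tinv ↑π⁻¹ n (i + 1) = Tinv i * dahaY T Tinv ↑π⁻¹ n i * Tinv i := by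
  have hinv := h.T_mul_Tinv i hi (by omega)
  rw [h.dahaY_eq_T_mul_dahaY_succ_mul_T hi hin]
  simp only [← mul_assoc, hinv.2, one_mul]
  rw [mul_assoc, hinv.1, mul_one]

lemma commute_dahaY_T (h : AffineBraidRelations n T Tinv π) {i k : ℕ} (hi : 1 ≤ i)
    (hik : i < k) (hk : k ≤ n - 1) : Commute (dahaY T Tinv ↑π⁻¹ n i) (T k) := by
  obtain ⟨k, rfl⟩ : ∃ k', k = k' + 1 := ⟨k - 1, by omega⟩
  have hR : SemiconjBy (orderedProd T i (n - i)) (T k) (T (k + 1)) :=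
    h.braid.semiconjBy_orderedProd_succ hi (by omega) (by omega) (by omega)
  have hQ : Commute (orderedProd Tinv 1 (i - 1)) (T (k + 1)) :=
    (commute_orderedProd fun x h₁ h₂ => (h.commute_Tinv_T h₁ (by omega) hk).symm).symm
  exact SemiconjBy.mul_left (SemiconjBy.mul_left hR (h.semiconjBy_piInv_T (by omega) hk)) hQ

lemma dahaY_succ_mul_T_mul_dahaY_succ (h : AffineBraidRelations n T Tinv π) {i : ℕ}
    (hi : 1 ≤ i) (hin : i + 1 ≤ n) :
    dahaY T Tinv ↑π⁻¹ n (i + 1) * T i * dahaY T Tinv ↑π⁻¹ n (i + 1)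
      = orderedProd T (i + 1) (n - (i + 1)) * orderedProd T i (n - (i + 1))
        * (↑π⁻¹ * ↑π⁻¹) * (orderedProd Tinv 2 (i - 1) * orderedProd Tinv 1 i) := by
  have hfar : Commute (orderedProd Tinv 1 (i - 1)) (orderedProd T (i + 1) (n - (i + 1))) :=
    commute_orderedProd fun m h₁ h₂ => (commute_orderedProd fun x h₃ h₄ =>
      (h.commute_Tinv_T h₃ (by omega) (by omega)).symm).symm
  have hπR : SemiconjBy (↑π⁻¹ : A) (orderedProd T (i + 1) (n - (i + 1)))
      (orderedProd T i (n - (i + 1))) := by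
    rw [← orderedProd_comp_succ]
    exact semiconjBy_orderedProd fun m h₁ h₂ => h.semiconjBy_piInv_T (by omega) (by omega)
  have hπQ : SemiconjBy (↑π⁻¹ : A) (orderedProd Tinv 2 (i - 1)) (orderedProd Tinv 1 (i - 1)) := by
    rw [show 2 = 1 + 1 from rfl, ← orderedProd_comp_succ]
    exact semiconjBy_orderedProd fun m h₁ h₂ => h.semiconjBy_piInv_Tinv h₁ (by omega)
  set R' := orderedProd T (i + 1) (n - (i + 1))
  set Q := orderedProd Tinv 1 (i - 1)
  calc dahaY T Tinv ↑π⁻¹ n (i + 1) * T i * dahaY T Tinv ↑π⁻¹ n (i + 1)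
      = R' * (↑π⁻¹ * ((orderedProd Tinv 1 i * T i) * R') * ↑π⁻¹) * orderedProd Tinv 1 i := by
        simp only [dahaY_eq, Nat.add_sub_cancel, R', mul_assoc]
    _ = R' * ((↑π⁻¹ * R') * (Q * ↑π⁻¹)) * orderedProd Tinv 1 i := by
        rw [h.orderedProd_Tinv_mul_T hi (by omega), hfar.eq]
        simp only [mul_assoc]
    _ = R' * orderedProd T i (n - (i + 1)) * (↑π⁻¹ * ↑π⁻¹)
          * (orderedProd Tinv 2 (i - 1) * orderedProd Tinv 1 i) := by
        rw [hπR.eq, ← hπQ.eq]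
        simp only [mul_assoc]

lemma commute_dahaY_dahaY_succ (h : AffineBraidRelations n T Tinv π) {i : ℕ}
    (hi : 1 ≤ i) (hin : i + 1 ≤ n) :
    Commute (dahaY T Tinv ↑π⁻¹ n i) (dahaY T Tinv ↑π⁻¹ n (i + 1)) := by
  have hA : SemiconjBy (orderedProd T (i + 1) (n - (i + 1)) * orderedProd T i (n - (i + 1)))
      (T (n - 1)) (T i) := by
    have := h.braid.mul_orderedProd_mul_orderedProd hi (m := n - (i + 1)) (by omega)
    rw [show i + (n - (i + 1)) = n - 1 by omega] at this
    exact this.symm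
  have hC : SemiconjBy (orderedProd Tinv 2 (i - 1) * orderedProd Tinv 1 i) (T i) (T 1) := by
    have hsandwich := h.braid_Tinv.mul_orderedProd_mul_orderedProd le_rfl (m := i - 1)
      (by omega)
    rw [show 1 + (i - 1) = i by omega] at hsandwich
    have hQ : orderedProd Tinv 1 i = orderedProd Tinv 1 (i - 1) * Tinv i := by
      have := orderedProd_succ' Tinv 1 (i - 1)
      rwa [show i - 1 + 1 = i by omega, show 1 + (i - 1) = i by omega] at this
    calc orderedProd Tinv 2 (i - 1) * orderedProd Tinv 1 i * T i
        = orderedProd Tinv 2 (i - 1) * orderedProd Tinv 1 (i - 1) := by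
          rw [mul_assoc, h.orderedProd_Tinv_mul_T hi (by omega)]
      _ = T 1 * (Tinv 1 * (orderedProd Tinv 2 (i - 1) * orderedProd Tinv 1 (i - 1))) := by
          rw [← mul_assoc, (h.T_mul_Tinv 1 le_rfl (by omega)).1, one_mul]
      _ = T 1 * (orderedProd Tinv 2 (i - 1) * orderedProd Tinv 1 i) := by
          rw [hsandwich, hQ, mul_assoc]
  have hN : Commute (T i) (dahaY T Tinv ↑π⁻¹ n (i + 1) * T i * dahaY T Tinv ↑π⁻¹ n (i + 1)) := by
    rw [h.dahaY_succ_mul_T_mul_dahaY_succ hi hin]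
    exact (SemiconjBy.mul_left (hA.mul_left (h.semiconjBy_piInv_mul_piInv (by omega))) hC).symm
  rw [h.dahaY_eq_T_mul_dahaY_succ_mul_T hi hin]
  exact hN.mul_mul_of_mul_mul

lemma commute_dahaY (h : AffineBraidRelations n T Tinv π) {i j : ℕ} (hi : 1 ≤ i) (hin : i ≤ n)
    (hj : 1 ≤ j) (hjn : j ≤ n) :
    Commute (dahaY T Tinv ↑π⁻¹ n i) (dahaY T Tinv ↑π⁻¹ n j) := by
  suffices key : ∀ i j, 1 ≤ i → i + 1 ≤ j → j ≤ n →
      Commute (dahaY T Tinv ↑π⁻¹ n i) (dahaY T Tinv ↑π⁻¹ n j) by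
    rcases lt_trichotomy i j with hij | rfl | hij
    · exact key i j hi hij hjn
    · exact Commute.refl _
    · exact (key j i hj hij hin).symm
  intro i j hi hij hjn
  induction j, hij using Nat.le_induction with
  | base => exact h.commute_dahaY_dahaY_succ hi hjn
  | succ j hij ih =>
    have hinv := h.T_mul_Tinv j (by omega) (by omega)
    have hTinv : Commute (dahaY T Tinv ↑π⁻¹ n i) (Tinv j) :=
      ((h.commute_dahaY_T hi hij (by omega)).symm.of_mul_eq_one_left hinv.1 hinv.2).symm
    rw [h.dahaY_succ_eq_Tinv_mul_dahaY_mul_Tinv (by omega) hjn]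
    exact (hTinv.mul_right (ih (by omega))).mul_right hTinv

end AffineBraidRelations

end DahaY

theorem daha_Y_commute_general
    {A : Type*} [Ring A]
    (n : ℕ)
    (T Tinv : ℕ → A) (π πinv : A)
    (hTinv : ∀ i, 1 ≤ i → i ≤ n - 1 → T i * Tinv i = 1 ∧ Tinv i * T i = 1)
    (hbraid : ∀ i, 1 ≤ i → i + 1 ≤ n - 1 →
      T i * T (i + 1) * T i = T (i + 1) * T i * T (i + 1))
    (hTcomm : ∀ i j, 1 ≤ i → i + 2 ≤ j → j ≤ n - 1 → T i * T j = T j * T i)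
    (hπinv : π * πinv = 1 ∧ πinv * π = 1)
    (hπT : ∀ i, 1 ≤ i → i + 1 ≤ n - 1 → π * T i = T (i + 1) * π)
    (hπnT : ∀ i, 1 ≤ i → i ≤ n - 1 → π ^ n * T i = T i * π ^ n) :
    ∀ i j, 1 ≤ i → i ≤ n → 1 ≤ j → j ≤ n →
      dahaY T Tinv πinv n i * dahaY T Tinv πinv n j
        = dahaY T Tinv πinv n j * dahaY T Tinv πinv n i := by
  have h : AffineBraidRelations n T Tinv ⟨π, πinv, hπinv.1, hπinv.2⟩ :=
    ⟨hTinv, ⟨hbraid, hTcomm⟩, hπT, hπnT⟩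
  intro i j hi hin hj hjn
  exact h.commute_dahaY hi hin hj hjn

/-- In the `GL_n` DAHA (presentation with generators `T_i`, `X_j^{±1}`, `π^{±1}`),
the elements `Y_i = T_i ⋯ T_{n-1} π⁻¹ T_1⁻¹ ⋯ T_{i-1}⁻¹` pairwise commute. -/
theorem daha_Y_commute
    {K : Type*} [Field K] {A : Type*} [Ring A] [Algebra K A]
    (n : ℕ) (q t : K) (hq : q ≠ 0) (ht : t ≠ 0)
    (T Tinv X Xinv : ℕ → A) (π πinv : A)
    (hTinv : ∀ i, 1 ≤ i → i ≤ n - 1 → T i * Tinv i = 1 ∧ Tinv i * T i = 1)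
    (hquad : ∀ i, 1 ≤ i → i ≤ n - 1 →
      (T i - algebraMap K A t) * (T i + algebraMap K A t⁻¹) = 0)
    (hbraid : ∀ i, 1 ≤ i → i + 1 ≤ n - 1 →
      T i * T (i + 1) * T i = T (i + 1) * T i * T (i + 1))
    (hTcomm : ∀ i j, 1 ≤ i → i + 2 ≤ j → j ≤ n - 1 → T i * T j = T j * T i)
    (hXinv : ∀ j, 1 ≤ j → j ≤ n → X j * Xinv j = 1 ∧ Xinv j * X j = 1)
    (hXcomm : ∀ i j, 1 ≤ i → i ≤ n → 1 ≤ j → j ≤ n → X i * X j = X j * X i)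
    (hTXT : ∀ i, 1 ≤ i → i ≤ n - 1 → T i * X i * T i = X (i + 1))
    (hTX : ∀ i j, 1 ≤ i → i ≤ n - 1 → 1 ≤ j → j ≤ n → j ≠ i → j ≠ i + 1 →
      T i * X j = X j * T i)
    (hπinv : π * πinv = 1 ∧ πinv * π = 1)
    (hπT : ∀ i, 1 ≤ i → i + 1 ≤ n - 1 → π * T i = T (i + 1) * π)
    (hπnT : ∀ i, 1 ≤ i → i ≤ n - 1 → π ^ n * T i = T i * π ^ n)
    (hπX : ∀ i, 1 ≤ i → i + 1 ≤ n → π * X i = X (i + 1) * π)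
    (hπXn : π * X n = ((q ^ 2)⁻¹ : K) • (X 1 * π)) :
    ∀ i j, 1 ≤ i → i ≤ n → 1 ≤ j → j ≤ n →
      dahaY T Tinv πinv n i * dahaY T Tinv πinv n j
        = dahaY T Tinv πinv n j * dahaY T Tinv πinv n i :=
  daha_Y_commute_general n T Tinv π πinv hTinv hbraid hTcomm hπinv hπT hπnT
end

section
/- The Demazure–Lusztig operators T_i on K[x_1^{±1},...,x_n^{±1}] satisfy the braid relations: T_i T_{i+1} T_i = T_{i+1} T_i T_{i+1} for 1 ≤ i ≤ n-2, and T_i T_j = T_j T_i for |i - j| ≥ 2. -/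
/-!
Write `T_i f = u · s_i f + v · A · (s_i f - f)` with `u = t`, `v = t - t⁻¹` and
`A = (x_i/x_{i+1} - 1)⁻¹`. Expanding both sides of the braid relation over the six words in
`s_i, s_{i+1}` applied to `f`, the coefficients of the three longest words agree identically, while
those of `s_i f`, `s_{i+1} f` and `f` differ by multiples of `A B - C (A + B + 1)`, where `B, C` are
the analogous quantities for the pairs `(x_{i+1}, x_{i+2})` and `(x_i, x_{i+2})`; this vanishes by
a partial-fraction identity. Operators with disjoint supports commute for the same reason without
any identity at all.
-/

/-- The field of rational functions in the variables `x_0, x_1, …` over `K`. -/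
noncomputable abbrev RatFieldN (K : Type*) [Field K] : Type _ :=
  FractionRing (MvPolynomial ℕ K)

/-- The variable `x_j`, viewed in the rational function field. -/
noncomputable def xVar (K : Type*) [Field K] (j : ℕ) : RatFieldN K :=
  algebraMap (MvPolynomial ℕ K) (RatFieldN K) (MvPolynomial.X j)

/-- A constant `c ∈ K`, viewed in the rational function field. -/
noncomputable def cConst (K : Type*) [Field K] (c : K) : RatFieldN K :=
  algebraMap (MvPolynomial ℕ K) (RatFieldN K) (MvPolynomial.C c)

/-- The Demazure–Lusztig operator
`T_i f = t (s_i f) + (t - t⁻¹) (s_i f - f)/(x_i/x_{i+1} - 1)`,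
where `σ` is the ring map induced by the transposition `s_i` of `x_i` and `x_{i+1}`. -/
noncomputable def demLusztig {K : Type*} [Field K] (t : K)
    (σ : RatFieldN K →+* RatFieldN K) (i : ℕ) (f : RatFieldN K) : RatFieldN K :=
  cConst K t * σ f + cConst K (t - t⁻¹) * (σ f - f) / (xVar K i / xVar K (i + 1) - 1)

section DemazureLusztigOp

variable {R : Type*} [CommRing R]

def demazureLusztigOp (u v : R) (s : R →+* R) (A f : R) : R :=
  u * s f + v * A * (s f - f)

theorem demazureLusztigOp_comm {u v A B : R} {s r : R →+* R} (hsr : ∀ f, s (r f) = r (s f))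
    (hsu : s u = u) (hsv : s v = v) (hsB : s B = B) (hru : r u = u) (hrv : r v = v)
    (hrA : r A = A) (f : R) :
    demazureLusztigOp u v s A (demazureLusztigOp u v r B f) =
      demazureLusztigOp u v r B (demazureLusztigOp u v s A f) := by
  simp only [demazureLusztigOp, map_add, map_mul, map_sub, hsu, hsv, hsB, hru, hrv, hrA, hsr]
  ring

theorem demazureLusztigOp_braid {u v A B C : R} {s r : R →+* R} (hs : ∀ f, s (s f) = f)
    (hr : ∀ f, r (r f) = f) (hsrs : ∀ f, s (r (s f)) = r (s (r f)))
    (hsu : s u = u) (hsv : s v = v) (hru : r u = u) (hrv : r v = v)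
    (hsA : s A = -1 - A) (hsB : s B = C) (hsC : s C = B)
    (hrA : r A = C) (hrB : r B = -1 - B) (hrC : r C = A)
    (hABC : A * B = C * (A + B + 1)) (f : R) :
    demazureLusztigOp u v s A (demazureLusztigOp u v r B (demazureLusztigOp u v s A f)) =
      demazureLusztigOp u v r B (demazureLusztigOp u v s A (demazureLusztigOp u v r B f)) := by
  simp only [demazureLusztigOp, map_add, map_mul, map_sub, hs, hr, hsrs,
    hsu, hsv, hru, hrv, hsA, hsB, hsC, hrA, hrB, hrC]
  linear_combination
    (v ^ 2 * ((u + v * A) * s f - (u + v * B) * r f) - v ^ 3 * (A - B) * f) * hABC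

end DemazureLusztigOp

section PartialFractions

variable {F : Type*} [Field F]

theorem inv_div_sub_one_symm {a b : F} (ha : a ≠ 0) (hb : b ≠ 0) (hab : a ≠ b) :
    (b / a - 1)⁻¹ = -1 - (a / b - 1)⁻¹ := by
  have hab' : a - b ≠ 0 := sub_ne_zero.mpr hab
  have hba' : b - a ≠ 0 := sub_ne_zero.mpr hab.symm
  rw [div_sub_one ha, div_sub_one hb, inv_div, inv_div]
  field_simp
  ring

theorem inv_div_sub_one_mul_inv_div_sub_one {a b c : F} (hb : b ≠ 0) (hc : c ≠ 0)
    (hab : a ≠ b) (hbc : b ≠ c) (hac : a ≠ c) :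
    (a / b - 1)⁻¹ * (b / c - 1)⁻¹ =
      (a / c - 1)⁻¹ * ((a / b - 1)⁻¹ + (b / c - 1)⁻¹ + 1) := by
  have hab' : a - b ≠ 0 := sub_ne_zero.mpr hab
  have hbc' : b - c ≠ 0 := sub_ne_zero.mpr hbc
  have hac' : a - c ≠ 0 := sub_ne_zero.mpr hac
  rw [div_sub_one hb, div_sub_one hc, div_sub_one hc, inv_div, inv_div, inv_div]
  field_simp
  ring

end PartialFractions

section RatFieldN

variable {K : Type*} [Field K]

theorem xVar_injective : Function.Injective (xVar K) := fun _ _ h =>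
  MvPolynomial.X_injective (IsFractionRing.injective (MvPolynomial ℕ K) (RatFieldN K) h)

theorem xVar_ne_zero (j : ℕ) : xVar K j ≠ 0 :=
  (map_ne_zero_iff _ (IsFractionRing.injective (MvPolynomial ℕ K) (RatFieldN K))).mpr
    (MvPolynomial.X_ne_zero j)

theorem RatFieldN.ringHom_ext {φ ψ : RatFieldN K →+* RatFieldN K}
    (hx : ∀ j, φ (xVar K j) = ψ (xVar K j)) (hc : ∀ c, φ (cConst K c) = ψ (cConst K c)) :
    φ = ψ :=
  IsLocalization.ringHom_ext (nonZeroDivisors (MvPolynomial ℕ K))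
    (MvPolynomial.ringHom_ext hc hx)

theorem demLusztig_eq_demazureLusztigOp (t : K) (σ : RatFieldN K →+* RatFieldN K) (i : ℕ)
    (f : RatFieldN K) :
    demLusztig t σ i f = demazureLusztigOp (cConst K t) (cConst K (t - t⁻¹)) σ
      (xVar K i / xVar K (i + 1) - 1)⁻¹ f := by
  rw [demLusztig, demazureLusztigOp, div_eq_mul_inv]
  ring

end RatFieldN

section Transpositions

variable {K : Type*} [Field K] {σ : ℕ → (RatFieldN K →+* RatFieldN K)}

theorem map_inv_xVar_div_sub_one (hσx : ∀ i j, σ i (xVar K j) = xVar K (Equiv.swap i (i + 1) j))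
    (i j k : ℕ) :
    σ i (xVar K j / xVar K k - 1)⁻¹ =
      (xVar K (Equiv.swap i (i + 1) j) / xVar K (Equiv.swap i (i + 1) k) - 1)⁻¹ := by
  simp only [map_inv₀, map_sub, map_div₀, map_one, hσx]

variable (hσx : ∀ i j, σ i (xVar K j) = xVar K (Equiv.swap i (i + 1) j))
  (hσc : ∀ i (c : K), σ i (cConst K c) = cConst K c)
include hσx hσc

theorem transposition_involutive (i : ℕ) (f : RatFieldN K) : σ i (σ i f) = f := by
  have : (σ i).comp (σ i) = RingHom.id _ :=
    RatFieldN.ringHom_ext (by simp [hσx]) (by simp [hσc])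
  exact DFunLike.congr_fun this f

theorem transposition_braid (i : ℕ) (f : RatFieldN K) :
    σ i (σ (i + 1) (σ i f)) = σ (i + 1) (σ i (σ (i + 1) f)) := by
  have : (σ i).comp ((σ (i + 1)).comp (σ i)) = (σ (i + 1)).comp ((σ i).comp (σ (i + 1))) := by
    refine RatFieldN.ringHom_ext (fun j => ?_) (by simp [hσc])
    simp only [RingHom.comp_apply, hσx, Equiv.swap_apply_def]
    congr 1
    split_ifs <;> omega
  exact DFunLike.congr_fun this f

theorem transposition_comm {i j : ℕ} (hij : i + 2 ≤ j) (f : RatFieldN K) :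
    σ i (σ j f) = σ j (σ i f) := by
  have : (σ i).comp (σ j) = (σ j).comp (σ i) := by
    refine RatFieldN.ringHom_ext (fun k => ?_) (by simp [hσc])
    simp only [RingHom.comp_apply, hσx, Equiv.swap_apply_def]
    congr 1
    split_ifs <;> omega
  exact DFunLike.congr_fun this f

end Transpositions

theorem demazure_lusztig_braid_general
    {K : Type*} [Field K] (n : ℕ) (t : K)
    (σ : ℕ → (RatFieldN K →+* RatFieldN K))
    (hσx : ∀ i j, σ i (xVar K j) = xVar K (Equiv.swap i (i + 1) j))
    (hσc : ∀ i (c : K), σ i (cConst K c) = cConst K c) :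
    (∀ i, i + 2 < n → ∀ f : RatFieldN K,
      demLusztig t (σ i) i (demLusztig t (σ (i + 1)) (i + 1) (demLusztig t (σ i) i f))
        = demLusztig t (σ (i + 1)) (i + 1)
            (demLusztig t (σ i) i (demLusztig t (σ (i + 1)) (i + 1) f)))
    ∧ (∀ i j, i + 2 ≤ j → j + 1 < n → ∀ f : RatFieldN K,
      demLusztig t (σ i) i (demLusztig t (σ j) j f)
        = demLusztig t (σ j) j (demLusztig t (σ i) i f)) := by
  have hx := xVar_ne_zero (K := K)
  have hne {j k : ℕ} (h : j ≠ k) : xVar K j ≠ xVar K k := xVar_injective.ne h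
  simp only [demLusztig_eq_demazureLusztigOp]
  refine ⟨fun i _ f => ?_, fun i j hij _ f => ?_⟩
  · refine demazureLusztigOp_braid (transposition_involutive hσx hσc i)
      (transposition_involutive hσx hσc (i + 1)) (transposition_braid hσx hσc i)
      (hσc _ _) (hσc _ _) (hσc _ _) (hσc _ _) ?_ ?_ ?_ ?_ ?_ ?_
      (inv_div_sub_one_mul_inv_div_sub_one (hx _) (hx _) (hne (by omega)) (hne (by omega))
        (hne (by omega))) f <;>
    simp only [map_inv_xVar_div_sub_one hσx, Equiv.swap_apply_left, Equiv.swap_apply_right,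
      Equiv.swap_apply_of_ne_of_ne (a := i) (b := i + 1) (x := i + 1 + 1) (by omega) (by omega),
      Equiv.swap_apply_of_ne_of_ne (a := i + 1) (b := i + 1 + 1) (x := i) (by omega) (by omega)]
    all_goals exact inv_div_sub_one_symm (hx _) (hx _) (hne (by omega))
  · refine demazureLusztigOp_comm (transposition_comm hσx hσc hij) (hσc _ _) (hσc _ _) ?_
      (hσc _ _) (hσc _ _) ?_ f <;>
    rw [map_inv_xVar_div_sub_one hσx, Equiv.swap_apply_of_ne_of_ne (by omega) (by omega),
      Equiv.swap_apply_of_ne_of_ne (by omega) (by omega)]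

/-- The Demazure–Lusztig operators satisfy the braid relations:
`T_i T_{i+1} T_i = T_{i+1} T_i T_{i+1}`, and `T_i T_j = T_j T_i` for `|i - j| ≥ 2`. -/
theorem demazure_lusztig_braid
    {K : Type*} [Field K] (n : ℕ) (t : K) (ht : t ≠ 0)
    (σ : ℕ → (RatFieldN K →+* RatFieldN K))
    (hσx : ∀ i j, σ i (xVar K j) = xVar K (Equiv.swap i (i + 1) j))
    (hσc : ∀ i (c : K), σ i (cConst K c) = cConst K c) :
    (∀ i, i + 2 < n → ∀ f : RatFieldN K,
      demLusztig t (σ i) i (demLusztig t (σ (i + 1)) (i + 1) (demLusztig t (σ i) i f))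
        = demLusztig t (σ (i + 1)) (i + 1)
            (demLusztig t (σ i) i (demLusztig t (σ (i + 1)) (i + 1) f)))
    ∧ (∀ i j, i + 2 ≤ j → j + 1 < n → ∀ f : RatFieldN K,
      demLusztig t (σ i) i (demLusztig t (σ j) j f)
        = demLusztig t (σ j) j (demLusztig t (σ i) i f)) :=
  demazure_lusztig_braid_general n t σ hσx hσc
end

section
/- In the quantum Weyl algebra W of rank n with generators ξ_i, ∂_i and relations ξ_iξ_j = qξ_jξ_i (i>j), ∂_i∂_j = q^{-1}∂_j∂_i (i>j), ∂_iξ_j = qξ_j∂_i (i≠j), ∂_iξ_i = 1 + q²ξ_i∂_i + (q²-1)Σ_{j<i} ξ_j∂_j, the functional representation on polynomials given by ∂_i(ξ_1^{k_1}···ξ_n^{k_n}) = q^{k_1+···+k_{i-1}}[k_i]_{q²} ξ_1^{k_1}···ξ_i^{k_i-1}···ξ_n^{k_n} and ξ_i acting by left multiplication, is a well-defined representation of W. -/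
open MvPolynomial

/-- The action of `ξ_i` (left multiplication in the quantum Weyl algebra) on the
polynomial model: on an ordered monomial `ξ^k` it multiplies by `q^{k_1+⋯+k_{i-1}}`
and raises the `i`-th exponent. -/
noncomputable def qXi {K : Type*} [Field K] {n : ℕ} (q : K) (i : Fin n)
    (f : MvPolynomial (Fin n) K) : MvPolynomial (Fin n) K :=
  Finsupp.sum (AddMonoidAlgebra.coeff f) fun m c =>
    (q ^ (∑ j ∈ Finset.univ.filter (fun j => j < i), m j)) •
      MvPolynomial.monomial (m + Finsupp.single i 1) c

/-- The action of `∂_i` on the polynomial model: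
`∂_i (ξ^k) = q^{k_1+⋯+k_{i-1}} [k_i]_{q²} ξ^{k - e_i}`, with `[k]_{q²} = ∑_{j<k} q^{2j}`. -/
noncomputable def qDel {K : Type*} [Field K] {n : ℕ} (q : K) (i : Fin n)
    (f : MvPolynomial (Fin n) K) : MvPolynomial (Fin n) K :=
  Finsupp.sum (AddMonoidAlgebra.coeff f) fun m c =>
    ((q ^ (∑ j ∈ Finset.univ.filter (fun j => j < i), m j)) *
        ∑ j ∈ Finset.range (m i), q ^ (2 * j)) •
      MvPolynomial.monomial (m - Finsupp.single i 1) c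

/-!
On an ordered monomial `ξ^k` both `qXi q i` and `qDel q i` act by a scalar times a shift of `k` by
`±e_i`, so every relation reduces to an identity between scalars. For the three commutation
relations it is the bookkeeping of how the weight `k_1 + ⋯ + k_{i-1}` changes when `k_j` is
shifted. For the relation between `∂_i` and `ξ_i` it is the telescoping identity
`q^{2(k_1 + ⋯ + k_{i-1})} = 1 + ∑_{j<i} q^{2(k_1 + ⋯ + k_{j-1})} (q^{2k_j} - 1)`
together with `(q² - 1) [k]_{q²} = q^{2k} - 1`.
-/

open Finset

theorem Finset.prod_filter_lt_eq_one_add {ι R : Type*} [LinearOrder ι] [Fintype ι] [CommRing R]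
    (x : ι → R) (i : ι) :
    ∏ j ∈ univ.filter (· < i), x j
      = 1 + ∑ j ∈ univ.filter (· < i), (∏ t ∈ univ.filter (· < j), x t) * (x j - 1) := by
  have h := prod_one_sub_ordered (univ.filter (· < i)) (fun j => 1 - x j)
  simp only [sub_sub_cancel] at h
  rw [h, sub_eq_add_neg, ← sum_neg_distrib]
  refine congrArg _ (sum_congr rfl fun j hj => ?_)
  have hlt : univ.filter (fun t => t < i ∧ t < j) = univ.filter (· < j) := by
    ext t
    simp only [mem_filter, mem_univ, true_and] at hj ⊢
    exact ⟨And.right, fun h => ⟨h.trans hj, h⟩⟩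
  rw [filter_filter, hlt]
  ring

namespace QuantumWeyl

section Exponents

variable {α : Type*}

theorem tsub_single_apply_of_ne {i j : α} (h : i ≠ j) (m : α →₀ ℕ) :
    (m - Finsupp.single j 1 : α →₀ ℕ) i = m i := by
  simp [Ne.symm h]

theorem add_single_apply_of_ne {i j : α} (h : i ≠ j) (m : α →₀ ℕ) :
    (m + Finsupp.single j 1 : α →₀ ℕ) i = m i := by
  simp [Ne.symm h]

theorem add_single_tsub_single_comm {i j : α} (h : i ≠ j) (m : α →₀ ℕ) :
    m + Finsupp.single j 1 - Finsupp.single i 1 = m - Finsupp.single i 1 + Finsupp.single j 1 := by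
  classical
  ext t
  simp only [Finsupp.tsub_apply, Finsupp.add_apply, Finsupp.single_apply]
  split_ifs <;> subst_vars <;> first | omega | exact absurd rfl h

end Exponents

variable {K : Type*} [Field K] {n : ℕ}

/-- `k_1 + ⋯ + k_{i-1}` for the ordered monomial `ξ^k`, `k = m`. -/
def lowerDegree (i : Fin n) (m : Fin n →₀ ℕ) : ℕ :=
  ∑ j ∈ univ.filter (· < i), m j

/-- `[k]_{q²}` -/
def qInt (q : K) (k : ℕ) : K :=
  ∑ j ∈ range k, q ^ (2 * j)

theorem qInt_succ (q : K) (k : ℕ) : qInt q (k + 1) = 1 + q ^ 2 * qInt q k := by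
  rw [qInt, sum_range_succ', add_comm, qInt, mul_sum]
  simp only [mul_add, pow_add, mul_one, mul_zero, pow_zero, mul_comm (q ^ 2)]

theorem sq_sub_one_mul_qInt (q : K) (k : ℕ) : (q ^ 2 - 1) * qInt q k = (q ^ 2) ^ k - 1 := by
  simp only [qInt, pow_mul, mul_comm (q ^ 2 - 1), geom_sum_mul]

theorem lowerDegree_add_single (i j : Fin n) (m : Fin n →₀ ℕ) :
    lowerDegree i (m + Finsupp.single j 1) = lowerDegree i m + if j < i then 1 else 0 := by
  simp [lowerDegree, sum_add_distrib, Finsupp.single_apply]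

theorem lowerDegree_add_single_of_lt {i j : Fin n} (h : j < i) (m : Fin n →₀ ℕ) :
    lowerDegree i (m + Finsupp.single j 1) = lowerDegree i m + 1 := by
  rw [lowerDegree_add_single, if_pos h]

theorem lowerDegree_add_single_of_not_lt {i j : Fin n} (h : ¬ j < i) (m : Fin n →₀ ℕ) :
    lowerDegree i (m + Finsupp.single j 1) = lowerDegree i m := by
  rw [lowerDegree_add_single, if_neg h, add_zero]

theorem lowerDegree_tsub_single_of_lt {i j : Fin n} (h : j < i) {m : Fin n →₀ ℕ}
    (hm : m j ≠ 0) : lowerDegree i (m - Finsupp.single j 1) + 1 = lowerDegree i m := by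
  rw [← lowerDegree_add_single_of_lt h,
    tsub_add_cancel_of_le (Finsupp.single_le_iff.mpr (Nat.one_le_iff_ne_zero.mpr hm))]

theorem lowerDegree_tsub_single_of_not_lt {i j : Fin n} (h : ¬ j < i) (m : Fin n →₀ ℕ) :
    lowerDegree i (m - Finsupp.single j 1) = lowerDegree i m := by
  refine sum_congr rfl fun t ht => ?_
  have hjt : j ≠ t := fun hjt => h (hjt ▸ (mem_filter.mp ht).2)
  simp [hjt]

theorem qXi_monomial (q : K) (i : Fin n) (m : Fin n →₀ ℕ) (c : K) :
    qXi q i (monomial m c) = q ^ lowerDegree i m • monomial (m + Finsupp.single i 1) c := by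
  rw [qXi, ← single_eq_monomial, AddMonoidAlgebra.coeff_single,
    Finsupp.sum_single_index (by simp), lowerDegree]

theorem qDel_monomial (q : K) (i : Fin n) (m : Fin n →₀ ℕ) (c : K) :
    qDel q i (monomial m c)
      = (q ^ lowerDegree i m * qInt q (m i)) • monomial (m - Finsupp.single i 1) c := by
  rw [qDel, ← single_eq_monomial, AddMonoidAlgebra.coeff_single,
    Finsupp.sum_single_index (by simp), lowerDegree, qInt]

theorem qXi_add (q : K) (i : Fin n) (f g : MvPolynomial (Fin n) K) :
    qXi q i (f + g) = qXi q i f + qXi q i g := by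
  rw [qXi, qXi, qXi, AddMonoidAlgebra.coeff_add]
  exact Finsupp.sum_add_index' (by simp) fun _ _ _ => by rw [← smul_add, ← map_add]

theorem qDel_add (q : K) (i : Fin n) (f g : MvPolynomial (Fin n) K) :
    qDel q i (f + g) = qDel q i f + qDel q i g := by
  rw [qDel, qDel, qDel, AddMonoidAlgebra.coeff_add]
  exact Finsupp.sum_add_index' (by simp) fun _ _ _ => by rw [← smul_add, ← map_add]

theorem qXi_qXi_of_lt (q : K) {i j : Fin n} (h : j < i) (f : MvPolynomial (Fin n) K) :
    qXi q i (qXi q j f) = q • qXi q j (qXi q i f) := by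
  induction f using MvPolynomial.induction_on' with
  | add f g hf hg => simp only [qXi_add, hf, hg, smul_add]
  | monomial m c =>
    simp only [qXi_monomial, smul_monomial, smul_eq_mul, lowerDegree_add_single_of_lt h,
      lowerDegree_add_single_of_not_lt (asymm h), add_right_comm m (Finsupp.single j 1)]
    congr 1
    ring

theorem qDel_qDel_of_lt {q : K} (hq : q ≠ 0) {i j : Fin n} (h : j < i)
    (f : MvPolynomial (Fin n) K) : qDel q i (qDel q j f) = q⁻¹ • qDel q j (qDel q i f) := by
  induction f using MvPolynomial.induction_on' with
  | add f g hf hg => simp only [qDel_add, hf, hg, smul_add]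
  | monomial m c =>
    simp only [qDel_monomial, smul_monomial, smul_eq_mul,
      tsub_right_comm (a := m) (b := Finsupp.single j 1),
      tsub_single_apply_of_ne h.ne', tsub_single_apply_of_ne h.ne,
      lowerDegree_tsub_single_of_not_lt (asymm h)]
    obtain hm | hm := eq_or_ne (m j) 0
    · simp [hm, qInt]
    · rw [← lowerDegree_tsub_single_of_lt h hm, pow_succ]
      field_simp

theorem qDel_qXi_of_ne (q : K) {i j : Fin n} (h : i ≠ j) (f : MvPolynomial (Fin n) K) :
    qDel q i (qXi q j f) = q • qXi q j (qDel q i f) := by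
  induction f using MvPolynomial.induction_on' with
  | add f g hf hg => simp only [qDel_add, qXi_add, hf, hg, smul_add]
  | monomial m c =>
    simp only [qDel_monomial, qXi_monomial, smul_monomial, smul_eq_mul,
      add_single_tsub_single_comm h, add_single_apply_of_ne h]
    congr 1
    obtain hij | hji := h.lt_or_gt
    · rw [lowerDegree_add_single_of_not_lt (asymm hij)]
      obtain hm | hm := eq_or_ne (m i) 0
      · simp [hm, qInt]
      · rw [← lowerDegree_tsub_single_of_lt hij hm, pow_succ]
        ring
    · rw [lowerDegree_add_single_of_lt hji, lowerDegree_tsub_single_of_not_lt (asymm hji),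
        pow_succ]
      ring

theorem qXi_qDel_monomial_self (q : K) (i : Fin n) (m : Fin n →₀ ℕ) (c : K) :
    qXi q i (qDel q i (monomial m c))
      = (q ^ (2 * lowerDegree i m) * qInt q (m i)) • monomial m c := by
  rw [qDel_monomial, smul_monomial, qXi_monomial, lowerDegree_tsub_single_of_not_lt (lt_irrefl i),
    smul_monomial, smul_monomial]
  obtain hm | hm := eq_or_ne (m i) 0
  · simp [hm, qInt]
  · rw [tsub_add_cancel_of_le (Finsupp.single_le_iff.mpr (Nat.one_le_iff_ne_zero.mpr hm))]
    congr 1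
    ring

theorem qDel_qXi_monomial_self (q : K) (i : Fin n) (m : Fin n →₀ ℕ) (c : K) :
    qDel q i (qXi q i (monomial m c))
      = (q ^ (2 * lowerDegree i m) * qInt q (m i + 1)) • monomial m c := by
  rw [qXi_monomial, smul_monomial, qDel_monomial, lowerDegree_add_single_of_not_lt (lt_irrefl i),
    add_tsub_cancel_right, smul_monomial, smul_monomial]
  simp only [Finsupp.add_apply, Finsupp.single_eq_same]
  congr 1
  ring

theorem pow_two_mul_lowerDegree (q : K) (i : Fin n) (m : Fin n →₀ ℕ) :
    q ^ (2 * lowerDegree i m)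
      = 1 + (q ^ 2 - 1) * ∑ j ∈ univ.filter (· < i), q ^ (2 * lowerDegree j m) * qInt q (m j) := by
  simp only [pow_mul, lowerDegree, ← prod_pow_eq_pow_sum]
  rw [prod_filter_lt_eq_one_add, mul_sum]
  congr 1
  refine sum_congr rfl fun j _ => ?_
  rw [← sq_sub_one_mul_qInt]
  ring

theorem qDel_qXi_self (q : K) (i : Fin n) (f : MvPolynomial (Fin n) K) :
    qDel q i (qXi q i f)
      = f + q ^ 2 • qXi q i (qDel q i f)
          + (q ^ 2 - 1) • ∑ j ∈ univ.filter (· < i), qXi q j (qDel q j f) := by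
  induction f using MvPolynomial.induction_on' with
  | add f g hf hg =>
    simp only [qDel_add, qXi_add, hf, hg, smul_add, sum_add_distrib]
    abel
  | monomial m c =>
    simp only [qDel_qXi_monomial_self, qXi_qDel_monomial_self, ← sum_smul, smul_smul]
    nth_rewrite 2 [← one_smul K (monomial m c)]
    rw [← add_smul, ← add_smul]
    congr 1
    linear_combination pow_two_mul_lowerDegree q i m
      + q ^ (2 * lowerDegree i m) * qInt_succ q (m i)

end QuantumWeyl

/-- The functional representation of the quantum Weyl algebra is well defined: the
operators `qXi` and `qDel` satisfy the defining relations of `W`, hence induce a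
representation of `W` on polynomials. -/
theorem quantum_weyl_functional_representation
    {K : Type*} [Field K] (n : ℕ) (q : K) (hq : q ≠ 0) :
    (∀ i j : Fin n, j < i → ∀ f : MvPolynomial (Fin n) K,
      qXi q i (qXi q j f) = q • qXi q j (qXi q i f))
    ∧ (∀ i j : Fin n, j < i → ∀ f : MvPolynomial (Fin n) K,
      qDel q i (qDel q j f) = q⁻¹ • qDel q j (qDel q i f))
    ∧ (∀ i j : Fin n, i ≠ j → ∀ f : MvPolynomial (Fin n) K,
      qDel q i (qXi q j f) = q • qXi q j (qDel q i f))
    ∧ (∀ i : Fin n, ∀ f : MvPolynomial (Fin n) K,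
      qDel q i (qXi q i f)
        = f + (q ^ 2) • qXi q i (qDel q i f)
          + (q ^ 2 - 1) • ∑ j ∈ Finset.univ.filter (fun j => j < i), qXi q j (qDel q j f)) :=
  ⟨fun _ _ h => QuantumWeyl.qXi_qXi_of_lt q h, fun _ _ h => QuantumWeyl.qDel_qDel_of_lt hq h,
    fun _ _ h => QuantumWeyl.qDel_qXi_of_ne q h, QuantumWeyl.qDel_qXi_self q⟩
end

section
/- The invariant ring C[x_1,...,x_n,y_1,...,y_n]^{Σ_n}, where Σ_n permutes the pairs (x_i,y_i) diagonally, is generated as a C-algebra by the polarized power sums p_{a,b} := Σ_{i=1}^n x_i^a y_i^b with 0 ≤ a ≤ n and b ≥ 0. -/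
open MvPolynomial

/-- The polarized power sum `p_{a,b} = ∑_i x_i^a y_i^b` in
`ℂ[x_1,…,x_n,y_1,…,y_n]`, where `x_i = X (inl i)` and `y_i = X (inr i)`. -/
noncomputable def polarizedPowerSum (n : ℕ) (a b : ℕ) :
    MvPolynomial (Fin n ⊕ Fin n) ℂ :=
  ∑ i : Fin n, X (Sum.inl i) ^ a * X (Sum.inr i) ^ b

/-!
Averaging over `Σ_n` (possible since `n!` is invertible) sends the monomial
`∏ x_j^{u_j} y_j^{v_j}` to the augmented monomial `∑_φ ∏ x_{φ j}^{u_j} y_{φ j}^{v_j}`,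
the sum running over all injections `φ`, so these span the invariants. Multiplying an
augmented monomial by `p_{a,b}` gives the augmented monomial with one more index carrying
`(a,b)`, plus those where `(a,b)` is added to the exponent of an existing index; by induction
on the number of indices, every augmented monomial is a polynomial in the `p_{a,b}`.
Finally `p_{a,b}` with `a > n` reduces to smaller `a`, because each `x_i` is a root of
`∏_t (T - x_t) = ∑_k (-1)^k e_k T^{n-k}`, and the `e_k` are polynomials in the `p_{a,0}`
with `a ≤ n` by Newton's identities.
-/

open Finset

namespace MvPolynomial

section Esymm

variable (σ : Type*) [Fintype σ]

theorem sum_neg_one_pow_mul_esymm_mul_X_pow_eq_zero (R : Type*) [CommRing R] (i : σ) :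
    ∑ j ∈ range (Fintype.card σ + 1),
      (-1) ^ j * esymm σ R j * X i ^ (Fintype.card σ - j) = 0 := by
  have vieta := congrArg (Polynomial.eval (X i))
    (Multiset.prod_X_sub_X_eq_sum_esymm (univ.val.map (X : σ → MvPolynomial σ R)))
  rw [Polynomial.eval_multiset_prod, Multiset.map_map, Polynomial.eval_finsetSum] at vieta
  simpa [← esymm_eq_multiset_esymm, prod_eq_zero (mem_univ i), mul_assoc] using vieta.symm

theorem esymm_mem_adjoin_psum (K : Type*) [Field K] [CharZero K] {m k : ℕ} (hk : k ≤ m) :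
    esymm σ K k ∈ Algebra.adjoin K (psum σ K '' Set.Iic m) := by
  induction k using Nat.strong_induction_on with
  | _ k ih =>
  rcases k.eq_zero_or_pos with rfl | hpos
  · simp
  have newton : esymm σ K k = C (k : K)⁻¹ * ((-1) ^ (k + 1) *
      ∑ a ∈ antidiagonal k with a.1 < k, (-1) ^ a.1 * esymm σ K a.1 * psum σ K a.2) := by
    rw [← mul_esymm_eq_sum, ← mul_assoc, ← C_eq_coe_nat, ← C_mul,
      inv_mul_cancel₀ (Nat.cast_ne_zero.mpr hpos.ne'), C_1, one_mul]
  rw [newton]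
  refine mul_mem (Subalgebra.algebraMap_mem _ _) (mul_mem (pow_mem (neg_mem (one_mem _)) _)
    (sum_mem fun a ha => ?_))
  rw [mem_filter, HasAntidiagonal.mem_antidiagonal] at ha
  exact mul_mem (mul_mem (pow_mem (neg_mem (one_mem _)) _) (ih a.1 ha.2 (by omega)))
    (Algebra.subset_adjoin ⟨a.2, Set.mem_Iic.mpr (by omega), rfl⟩)

end Esymm

section Diagonal

variable (R ι : Type*) [CommSemiring R]

def diagInvariants : Subalgebra R (MvPolynomial (ι ⊕ ι) R) where
  carrier := {f | ∀ σ : Equiv.Perm ι, rename (Sum.map σ σ) f = f}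
  algebraMap_mem' r σ := rename_C _ r
  mul_mem' hf hg σ := by rw [map_mul, hf σ, hg σ]
  add_mem' hf hg σ := by rw [map_add, hf σ, hg σ]

theorem mem_diagInvariants {f : MvPolynomial (ι ⊕ ι) R} :
    f ∈ diagInvariants R ι ↔ ∀ σ : Equiv.Perm ι, rename (Sum.map σ σ) f = f :=
  Iff.rfl

variable {R ι} in
noncomputable def diagMonomial (i : ι) (u : ℕ × ℕ) : MvPolynomial (ι ⊕ ι) R :=
  X (Sum.inl i) ^ u.1 * X (Sum.inr i) ^ u.2

theorem diagMonomial_add (i : ι) (u v : ℕ × ℕ) :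
    (diagMonomial i (u + v) : MvPolynomial (ι ⊕ ι) R)
      = diagMonomial i u * diagMonomial i v := by
  simp only [diagMonomial, Prod.fst_add, Prod.snd_add, pow_add]
  ring

theorem rename_diagMonomial (σ : Equiv.Perm ι) (i : ι) (u : ℕ × ℕ) :
    rename (Sum.map σ σ) (diagMonomial i u : MvPolynomial (ι ⊕ ι) R)
      = diagMonomial (σ i) u := by
  simp [diagMonomial]

variable [Fintype ι]

theorem monomial_one_eq_prod_diagMonomial (d : ι ⊕ ι →₀ ℕ) :
    (monomial d 1 : MvPolynomial (ι ⊕ ι) R)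
      = ∏ i, diagMonomial i (d (Sum.inl i), d (Sum.inr i)) := by
  rw [monomial_eq, C_1, one_mul, Finsupp.prod_fintype _ _ fun _ => pow_zero _,
    Fintype.prod_sum_type, ← prod_mul_distrib]
  rfl

noncomputable def diagPSum (a b : ℕ) : MvPolynomial (ι ⊕ ι) R :=
  ∑ i, diagMonomial i (a, b)

noncomputable def adjoinDiagPSum : Subalgebra R (MvPolynomial (ι ⊕ ι) R) :=
  Algebra.adjoin R {g | ∃ a b, a ≤ Fintype.card ι ∧ g = diagPSum R ι a b}

theorem rename_diagPSum (σ : Equiv.Perm ι) (a b : ℕ) :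
    rename (Sum.map σ σ) (diagPSum R ι a b) = diagPSum R ι a b := by
  simp only [diagPSum, map_sum, rename_diagMonomial]
  exact Equiv.sum_comp σ fun i => (diagMonomial i (a, b) : MvPolynomial (ι ⊕ ι) R)

theorem adjoinDiagPSum_le_diagInvariants : adjoinDiagPSum R ι ≤ diagInvariants R ι := by
  refine Algebra.adjoin_le ?_
  rintro _ ⟨a, b, -, rfl⟩ σ
  exact rename_diagPSum R ι σ a b

theorem rename_inl_psum (a : ℕ) : rename Sum.inl (psum ι R a) = diagPSum R ι a 0 := by
  simp [psum, diagPSum, diagMonomial]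

variable {κ κ' : Type*} [Fintype κ] [Fintype κ']

noncomputable def augmentedMonomial (l : κ → ℕ × ℕ) : MvPolynomial (ι ⊕ ι) R :=
  ∑ φ : κ ↪ ι, ∏ j, diagMonomial (φ j) (l j)

theorem augmentedMonomial_comp_equiv (e : κ' ≃ κ) (l : κ → ℕ × ℕ) :
    augmentedMonomial R ι (l ∘ e) = augmentedMonomial R ι l := by
  refine Fintype.sum_equiv (e.embeddingCongr (Equiv.refl ι)) _ _ fun φ => ?_
  rw [← e.prod_comp]
  simp [Equiv.embeddingCongr_apply]

theorem augmentedMonomial_of_isEmpty [IsEmpty κ] (l : κ → ℕ × ℕ) :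
    augmentedMonomial R ι l = 1 := by
  simp [augmentedMonomial]

theorem diagPSum_mul_augmentedMonomial [DecidableEq κ] (l : Option κ → ℕ × ℕ) :
    diagPSum R ι (l none).1 (l none).2 * augmentedMonomial R ι (l ∘ some)
      = augmentedMonomial R ι l
        + ∑ j, augmentedMonomial R ι (Function.update (l ∘ some) j (l (some j) + l none)) := by
  classical
  set P : (κ ↪ ι) → MvPolynomial (ι ⊕ ι) R :=
    fun f => ∏ j, diagMonomial (f j) (l (some j)) with hP
  have new_index : augmentedMonomial R ι l
      = ∑ f : κ ↪ ι, ∑ i : ↥(Set.range f)ᶜ, diagMonomial (i : ι) (l none) * P f := by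
    rw [augmentedMonomial, ← (Function.Embedding.optionEmbeddingEquiv κ ι).symm.sum_comp,
      Fintype.sum_sigma]
    refine Fintype.sum_congr _ _ fun f => Fintype.sum_congr _ _ fun i => ?_
    simp [Fintype.prod_option, P]
  have old_index :
      ∑ j, augmentedMonomial R ι (Function.update (l ∘ some) j (l (some j) + l none))
        = ∑ f : κ ↪ ι, ∑ j, diagMonomial (f j) (l none) * P f := by
    simp only [augmentedMonomial]
    rw [sum_comm]
    refine sum_congr rfl fun f _ => sum_congr rfl fun j _ => ?_
    simp only [hP]
    rw [Fintype.prod_eq_mul_prod_compl j, Fintype.prod_eq_mul_prod_compl j]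
    simp only [Function.update_self, diagMonomial_add]
    rw [prod_congr rfl fun j' hj' => by
      rw [Function.update_of_ne (by simpa using hj'), Function.comp_apply]]
    ring
  have split (f : κ ↪ ι) : ∑ i, diagMonomial i (l none) * P f
      = ∑ i : ↥(Set.range f)ᶜ, diagMonomial (i : ι) (l none) * P f
        + ∑ j, diagMonomial (f j) (l none) * P f := by
    have range_sum := (Equiv.ofInjective f f.injective).sum_comp
      (fun i : Set.range f => (diagMonomial (i : ι) (l none) * P f : MvPolynomial (ι ⊕ ι) R))
    simp only [Equiv.ofInjective_apply] at range_sum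
    rw [range_sum, add_comm]
    convert (Fintype.sum_subtype_add_sum_subtype (· ∈ Set.range f) _).symm
  rw [new_index, old_index, ← sum_add_distrib, ← Fintype.sum_congr _ _ split, diagPSum,
    augmentedMonomial, sum_mul_sum, sum_comm]
  rfl

theorem sum_rename_monomial_one [DecidableEq ι] (d : ι ⊕ ι →₀ ℕ) :
    ∑ σ : Equiv.Perm ι, rename (Sum.map σ σ) (monomial d 1 : MvPolynomial (ι ⊕ ι) R)
      = augmentedMonomial R ι fun i => (d (Sum.inl i), d (Sum.inr i)) := by
  simp only [monomial_one_eq_prod_diagMonomial, map_prod, rename_diagMonomial]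
  exact (Fintype.sum_equiv (Equiv.embeddingEquivOfFinite ι) _ _ fun φ => rfl).symm

end Diagonal

theorem sum_neg_one_pow_mul_esymm_mul_diagPSum_eq_zero (R ι : Type*) [CommRing R] [Fintype ι]
    {a : ℕ} (ha : Fintype.card ι ≤ a) (b : ℕ) :
    ∑ j ∈ range (Fintype.card ι + 1),
      (-1) ^ j * rename Sum.inl (esymm ι R j) * diagPSum R ι (a - j) b = 0 := by
  have root (i : ι) :=
    congrArg (fun p => rename Sum.inl p * diagMonomial (R := R) i (a - Fintype.card ι, b))
      (sum_neg_one_pow_mul_esymm_mul_X_pow_eq_zero ι R i)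
  simp only [map_sum, map_mul, map_pow, map_neg, map_one, rename_X, sum_mul] at root
  rw [← sum_eq_zero fun i _ => root i, sum_comm]
  refine sum_congr rfl fun j hj => ?_
  rw [diagPSum, mul_sum]
  refine sum_congr rfl fun i _ => ?_
  have : a - j = Fintype.card ι - j + (a - Fintype.card ι) := by
    have := mem_range.mp hj; omega
  simp only [diagMonomial, this, pow_add]
  ring

section Field

variable {K : Type*} [Field K] [CharZero K] {ι : Type*} [Fintype ι]

theorem rename_inl_esymm_mem_adjoinDiagPSum {k : ℕ} (hk : k ≤ Fintype.card ι) :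
    rename Sum.inl (esymm ι K k) ∈ adjoinDiagPSum K ι := by
  have h := (Subalgebra.mem_map (f := rename (R := K) (Sum.inl : ι → ι ⊕ ι))).mpr
    ⟨_, esymm_mem_adjoin_psum ι K hk, rfl⟩
  rw [AlgHom.map_adjoin, ← Set.image_comp] at h
  refine Algebra.adjoin_le ?_ h
  rintro _ ⟨a, ha, rfl⟩
  exact Algebra.subset_adjoin ⟨a, 0, ha, rename_inl_psum K ι a⟩

theorem diagPSum_mem_adjoinDiagPSum (a b : ℕ) : diagPSum K ι a b ∈ adjoinDiagPSum K ι := by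
  induction a using Nat.strong_induction_on with
  | _ a ih =>
  by_cases ha : a ≤ Fintype.card ι
  · exact Algebra.subset_adjoin ⟨a, b, ha, rfl⟩
  have newton := sum_neg_one_pow_mul_esymm_mul_diagPSum_eq_zero K ι (le_of_not_ge ha) b
  simp only [sum_range_succ', pow_zero, esymm_zero, map_one, one_mul, Nat.sub_zero] at newton
  rw [add_eq_zero_iff_eq_neg'.mp newton]
  refine neg_mem (sum_mem fun j hj => mul_mem (mul_mem (pow_mem (neg_mem (one_mem _)) _)
    (rename_inl_esymm_mem_adjoinDiagPSum (mem_range.mp hj))) (ih _ (by omega)))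

theorem augmentedMonomial_mem_adjoinDiagPSum {κ : Type*} [Fintype κ] (l : κ → ℕ × ℕ) :
    augmentedMonomial K ι l ∈ adjoinDiagPSum K ι := by
  refine Fintype.induction_empty_option
    (P := fun κ _ => ∀ l : κ → ℕ × ℕ, augmentedMonomial K ι l ∈ adjoinDiagPSum K ι)
    ?_ ?_ ?_ κ l
  · intro α β _ e h l
    let := Fintype.ofEquiv β e.symm
    rw [← augmentedMonomial_comp_equiv K ι e]
    exact h _
  · intro l
    rw [augmentedMonomial_of_isEmpty]
    exact one_mem _
  · intro α _ ih l
    classical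
    rw [eq_sub_of_add_eq (diagPSum_mul_augmentedMonomial K ι l).symm]
    exact sub_mem (mul_mem (diagPSum_mem_adjoinDiagPSum _ _) (ih _)) (sum_mem fun j _ => ih _)

theorem sum_rename_mem_adjoinDiagPSum [DecidableEq ι] (f : MvPolynomial (ι ⊕ ι) K) :
    ∑ σ : Equiv.Perm ι, rename (Sum.map σ σ) f ∈ adjoinDiagPSum K ι := by
  induction f using MvPolynomial.induction_on' with
  | monomial d r =>
    have : monomial d r = r • monomial d (1 : K) := by rw [smul_monomial, smul_eq_mul, mul_one]
    simp only [this, map_smul, ← smul_sum]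
    rw [sum_rename_monomial_one]
    exact Subalgebra.smul_mem _ (augmentedMonomial_mem_adjoinDiagPSum _) r
  | add p q hp hq =>
    simpa only [map_add, sum_add_distrib] using add_mem hp hq

theorem diagInvariants_le_adjoinDiagPSum [DecidableEq ι] :
    diagInvariants K ι ≤ adjoinDiagPSum K ι := by
  intro f hf
  have reynolds : f = (Fintype.card (Equiv.Perm ι) : K)⁻¹ •
      ∑ σ : Equiv.Perm ι, rename (Sum.map σ σ) f := by
    rw [sum_congr rfl fun σ _ => (mem_diagInvariants K ι).mp hf σ, sum_const, card_univ,
      ← Nat.cast_smul_eq_nsmul K, smul_smul,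
      inv_mul_cancel₀ (Nat.cast_ne_zero.mpr Fintype.card_ne_zero), one_smul]
  rw [reynolds]
  exact Subalgebra.smul_mem _ (sum_rename_mem_adjoinDiagPSum f) _

theorem adjoinDiagPSum_eq_diagInvariants : adjoinDiagPSum K ι = diagInvariants K ι := by
  classical
  exact le_antisymm (adjoinDiagPSum_le_diagInvariants K ι) diagInvariants_le_adjoinDiagPSum

end Field

end MvPolynomial

/-- The invariant ring `ℂ[x_1,…,x_n,y_1,…,y_n]^{Σ_n}` (for the diagonal permutation
action on the pairs `(x_i, y_i)`) is generated as a `ℂ`-algebra by the polarized power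
sums `p_{a,b}` with `0 ≤ a ≤ n` and `b ≥ 0`. -/
theorem diagonal_invariants_generated_by_polarized_power_sums (n : ℕ) :
    ∀ f : MvPolynomial (Fin n ⊕ Fin n) ℂ,
      (∀ σ : Equiv.Perm (Fin n), rename (Sum.map σ σ) f = f)
        ↔ f ∈ Algebra.adjoin ℂ
            {g | ∃ a b : ℕ, a ≤ n ∧ g = polarizedPowerSum n a b} := by
  intro f
  rw [← mem_diagInvariants, ← adjoinDiagPSum_eq_diagInvariants, adjoinDiagPSum,
    Fintype.card_fin]
  -- `polarizedPowerSum n` unfolds to `diagPSum ℂ (Fin n)`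
  rfl
end

section
/- Let H be a Hopf algebra over a field, A an H-module algebra, and μ: H → A a quantum moment map, i.e., an algebra homomorphism satisfying μ(h)a = (h_{(1)} ▸ a) μ(h_{(2)}) for all h ∈ H, a ∈ A. Let χ: H → k be an algebra character and I_χ := A·{μ(h) - χ(h) : h ∈ H} the left ideal. Then the H-invariants (A/I_χ)^H form an associative algebra under the multiplication induced from A. -/
/-!
Write `I = I_χ` and call `x` invariant when `h ▸ x ≡ ε(h) x (mod I)` for all `h`.
The moment map identity `μ(g) y = ∑ (g₁ ▸ y) μ(g₂)` together with `∑ ε(g₁) g₂ = g` shows that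
an invariant `y` commutes with `μ(H)` modulo `I`, since `I` is stable under right multiplication
by `μ(H)` (`μ` and `χ` are multiplicative). Hence `(μ(g) - χ(g)) y ≡ y (μ(g) - χ(g)) ≡ 0`, i.e.
`I y ⊆ I` for invariant `y`. This makes the product of classes independent of the lifts, and the
coproduct rule for `h ▸ (xy)` shows that it is again invariant.
-/

open TensorProduct

/-- The left ideal `I_χ = A·{μ(h) - χ(h) : h ∈ H}` of a quantum moment map twisted by a
character `χ`. -/
noncomputable def momentIdeal {k H A : Type*} [Field k] [Ring H] [HopfAlgebra k H]
    [Ring A] [Algebra k A] (μ : H →ₐ[k] A) (χ : H →ₐ[k] k) : Submodule A A :=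
  Submodule.span A (Set.range fun h => μ h - algebraMap k A (χ h))

theorem Submodule.mul_mem_of_mem_span {A : Type*} [Ring A] {s : Set A} {N : Submodule A A}
    {b : A} (hs : ∀ a ∈ s, a * b ∈ N) {z : A} (hz : z ∈ Submodule.span A s) : z * b ∈ N :=
  (Submodule.map_span_le (LinearMap.toSpanSingleton A A b) s N).2 hs ⟨z, hz, rfl⟩

theorem mul_sub_mul_mem_of_forall_mul_mem {A : Type*} [Ring A] {I : Submodule A A}
    {x x' y y' : A} (hy' : ∀ z ∈ I, z * y' ∈ I) (hxx' : x - x' ∈ I) (hyy' : y - y' ∈ I) :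
    x * y - x' * y' ∈ I := by
  have hsplit : x * y - x' * y' = x * (y - y') + (x - x') * y' := by noncomm_ring
  rw [hsplit]
  exact add_mem (I.smul_mem x hyy') (hy' _ hxx')

section Coalgebra

variable {k H A : Type*} [CommRing k] [AddCommGroup H] [Module k H] [Coalgebra k H]
  [Ring A] [Algebra k A]

theorem sum_counit_smul_eq_of_comul_eq {m : ℕ} {h : H} {h₁ h₂ : Fin m → H}
    (hc : Coalgebra.comul (R := k) h = ∑ i, h₁ i ⊗ₜ[k] h₂ i) :
    ∑ i, Coalgebra.counit (R := k) (h₁ i) • h₂ i = h := by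
  have := congrArg ((TensorProduct.lid k H).toLinearMap ∘ₗ (Coalgebra.counit (R := k)).rTensor H) hc
  simpa [Coalgebra.rTensor_counit_comul, map_sum] using this.symm

theorem sum_counit_mul_counit_eq_of_comul_eq {m : ℕ} {h : H} {h₁ h₂ : Fin m → H}
    (hc : Coalgebra.comul (R := k) h = ∑ i, h₁ i ⊗ₜ[k] h₂ i) :
    ∑ i, Coalgebra.counit (R := k) (h₁ i) * Coalgebra.counit (R := k) (h₂ i) =
      Coalgebra.counit (R := k) h := by
  simpa [map_sum, smul_eq_mul] using
    congrArg (Coalgebra.counit (R := k)) (sum_counit_smul_eq_of_comul_eq hc)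

/-- `x` represents an `H`-invariant class of `A ⧸ I`. -/
def IsInvariantMod (act : H →ₗ[k] Module.End k A) (I : Submodule A A) (x : A) : Prop :=
  ∀ h : H, act h x - Coalgebra.counit (R := k) h • x ∈ I

variable {act : H →ₗ[k] Module.End k A} {I : Submodule A A}

theorem IsInvariantMod.of_sub_mem (hI : ∀ (h : H), ∀ z ∈ I, act h z ∈ I) {y y' : A}
    (hy : IsInvariantMod act I y) (hyy' : y - y' ∈ I) : IsInvariantMod act I y' := by
  intro h
  have hsplit : act h y' - Coalgebra.counit (R := k) h • y' =
      (act h y - Coalgebra.counit (R := k) h • y) -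
        (act h (y - y') - Coalgebra.counit (R := k) h • (y - y')) := by
    simp only [map_sub, smul_sub]
    abel
  rw [hsplit]
  exact sub_mem (hy h) (sub_mem (hI h _ hyy') (I.smul_of_tower_mem _ hyy'))

theorem act_mul_sub_counit_smul_mem {h : H} {m : ℕ} {h₁ h₂ : Fin m → H}
    (hc : Coalgebra.comul (R := k) h = ∑ i, h₁ i ⊗ₜ[k] h₂ i)
    (hmul : ∀ a b : A, act h (a * b) = ∑ i, act (h₁ i) a * act (h₂ i) b) {x y : A}
    (hx : IsInvariantMod act I x) (hy : IsInvariantMod act I y) (hIy : ∀ z ∈ I, z * y ∈ I) :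
    act h (x * y) - Coalgebra.counit (R := k) h • (x * y) ∈ I := by
  have hexpand : act h (x * y) - Coalgebra.counit (R := k) h • (x * y) =
      ∑ i, (act (h₁ i) x * (act (h₂ i) y - Coalgebra.counit (R := k) (h₂ i) • y) +
        Coalgebra.counit (R := k) (h₂ i) •
          ((act (h₁ i) x - Coalgebra.counit (R := k) (h₁ i) • x) * y)) := by
    rw [hmul x y, ← sum_counit_mul_counit_eq_of_comul_eq hc, Finset.sum_smul,
      ← Finset.sum_sub_distrib]
    refine Finset.sum_congr rfl fun i _ => ?_
    simp only [mul_sub, sub_mul, smul_sub, mul_smul_comm, smul_mul_assoc, smul_smul, mul_comm]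
    abel
  rw [hexpand]
  exact Submodule.sum_mem _ fun i _ =>
    add_mem (I.smul_mem _ (hy (h₂ i))) (I.smul_of_tower_mem _ (hIy _ (hx (h₁ i))))

end Coalgebra

section MomentMap

variable {k H A : Type*} [CommRing k] [Ring H] [Bialgebra k H] [Ring A] [Algebra k A]
  {act : H →ₗ[k] Module.End k A} {μ : H →ₐ[k] A} {I : Submodule A A}

theorem map_mul_sub_mul_map_mem_of_isInvariantMod (hIμ : ∀ z ∈ I, ∀ h, z * μ h ∈ I) {g : H}
    {m : ℕ} {h₁ h₂ : Fin m → H} (hc : Coalgebra.comul (R := k) g = ∑ i, h₁ i ⊗ₜ[k] h₂ i)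
    (hmom : ∀ a : A, μ g * a = ∑ i, act (h₁ i) a * μ (h₂ i)) {y : A}
    (hy : IsInvariantMod act I y) : μ g * y - y * μ g ∈ I := by
  have hyμ : y * μ g = ∑ i, (Coalgebra.counit (R := k) (h₁ i) • y) * μ (h₂ i) := by
    conv_lhs => rw [← sum_counit_smul_eq_of_comul_eq hc]
    simp only [map_sum, map_smul, Finset.mul_sum, mul_smul_comm, smul_mul_assoc]
  rw [hmom, hyμ, ← Finset.sum_sub_distrib]
  exact Submodule.sum_mem _ fun i _ => by
    rw [← sub_mul]
    exact hIμ _ (hy (h₁ i)) (h₂ i)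

end MomentMap

section MomentIdeal

variable {k H A : Type*} [Field k] [Ring H] [HopfAlgebra k H] [Ring A] [Algebra k A]
  {μ : H →ₐ[k] A} {χ : H →ₐ[k] k}

theorem sub_algebraMap_mem_momentIdeal (h : H) :
    μ h - algebraMap k A (χ h) ∈ momentIdeal μ χ :=
  Submodule.subset_span ⟨h, rfl⟩

theorem mul_map_mem_momentIdeal {z : A} (hz : z ∈ momentIdeal μ χ) (h : H) :
    z * μ h ∈ momentIdeal μ χ := by
  refine Submodule.mul_mem_of_mem_span ?_ hz
  rintro _ ⟨g, rfl⟩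
  have hsplit : (μ g - algebraMap k A (χ g)) * μ h =
      (μ (g * h) - algebraMap k A (χ (g * h))) -
        algebraMap k A (χ g) * (μ h - algebraMap k A (χ h)) := by
    simp only [map_mul]
    noncomm_ring
  rw [hsplit]
  exact sub_mem (sub_algebraMap_mem_momentIdeal _)
    ((momentIdeal μ χ).smul_mem _ (sub_algebraMap_mem_momentIdeal h))

theorem mul_mem_momentIdeal_of_commute_mod {y : A}
    (hy : ∀ g : H, μ g * y - y * μ g ∈ momentIdeal μ χ) {z : A} (hz : z ∈ momentIdeal μ χ) :
    z * y ∈ momentIdeal μ χ := by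
  refine Submodule.mul_mem_of_mem_span ?_ hz
  rintro _ ⟨g, rfl⟩
  have hsplit : (μ g - algebraMap k A (χ g)) * y =
      (μ g * y - y * μ g) + y * (μ g - algebraMap k A (χ g)) := by
    rw [sub_mul, mul_sub, Algebra.commutes]
    noncomm_ring
  rw [hsplit]
  exact add_mem (hy g) ((momentIdeal μ χ).smul_mem y (sub_algebraMap_mem_momentIdeal g))

end MomentIdeal

theorem quantum_hamiltonian_reduction_invariants_algebra_general
    {k H A : Type*} [Field k] [Ring H] [HopfAlgebra k H] [Ring A] [Algebra k A]
    (act : H →ₗ[k] Module.End k A)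
    (μ : H →ₐ[k] A) (χ : H →ₐ[k] k)
    (hsweedler : ∀ h : H, ∃ (m : ℕ) (h₁ h₂ : Fin m → H),
      (Coalgebra.comul (R := k) h = ∑ i : Fin m, h₁ i ⊗ₜ[k] h₂ i) ∧
      (∀ a b : A, act h (a * b) = ∑ i : Fin m, act (h₁ i) a * act (h₂ i) b) ∧
      (∀ a : A, μ h * a = ∑ i : Fin m, act (h₁ i) a * μ (h₂ i)))
    (hstable : ∀ (h : H) (x : A), x ∈ momentIdeal μ χ → act h x ∈ momentIdeal μ χ) :
    (∀ x y : A,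
      (∀ h : H, act h x - Coalgebra.counit (R := k) h • x ∈ momentIdeal μ χ) →
      (∀ h : H, act h y - Coalgebra.counit (R := k) h • y ∈ momentIdeal μ χ) →
      ∀ h : H, act h (x * y) - Coalgebra.counit (R := k) h • (x * y) ∈ momentIdeal μ χ)
    ∧ (∀ x x' y y' : A,
      (∀ h : H, act h x - Coalgebra.counit (R := k) h • x ∈ momentIdeal μ χ) →
      (∀ h : H, act h y - Coalgebra.counit (R := k) h • y ∈ momentIdeal μ χ) →
      x - x' ∈ momentIdeal μ χ → y - y' ∈ momentIdeal μ χ →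
      x * y - x' * y' ∈ momentIdeal μ χ) := by
  have hright : ∀ y, IsInvariantMod act (momentIdeal μ χ) y →
      ∀ z ∈ momentIdeal μ χ, z * y ∈ momentIdeal μ χ := by
    intro y hy z hz
    refine mul_mem_momentIdeal_of_commute_mod (fun g => ?_) hz
    obtain ⟨m, h₁, h₂, hc, -, hmom⟩ := hsweedler g
    exact map_mul_sub_mul_map_mem_of_isInvariantMod
      (fun _ hz => mul_map_mem_momentIdeal hz) hc hmom hy
  refine ⟨fun x y hx hy h => ?_, fun x x' y y' _ hy hxx' hyy' => ?_⟩
  · obtain ⟨m, h₁, h₂, hc, hmul, -⟩ := hsweedler h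
    exact act_mul_sub_counit_smul_mem hc hmul hx hy (hright y hy)
  · exact mul_sub_mul_mem_of_forall_mul_mem
      (hright y' (IsInvariantMod.of_sub_mem hstable hy hyy')) hxx' hyy'

/-- Quantum Hamiltonian reduction: if `H` is a Hopf algebra acting on an algebra `A`
(making `A` an `H`-module algebra), `μ : H → A` is a quantum moment map
(`μ(h)a = (h₍₁₎ ▸ a) μ(h₍₂₎)`), `χ` is a character, and the left ideal
`I_χ = A·(μ - χ)(H)` is `H`-stable, then the `H`-invariants of `A/I_χ` form an
associative algebra under the multiplication induced from `A`: the product of invariant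
classes is invariant, and it is independent of the choice of lifts. -/
theorem quantum_hamiltonian_reduction_invariants_algebra
    {k H A : Type*} [Field k] [Ring H] [HopfAlgebra k H] [Ring A] [Algebra k A]
    (act : H →ₗ[k] Module.End k A)
    (hact1 : ∀ h : H, act h (1 : A) = Coalgebra.counit (R := k) h • (1 : A))
    (μ : H →ₐ[k] A) (χ : H →ₐ[k] k)
    (hsweedler : ∀ h : H, ∃ (m : ℕ) (h₁ h₂ : Fin m → H),
      (Coalgebra.comul (R := k) h = ∑ i : Fin m, h₁ i ⊗ₜ[k] h₂ i) ∧
      (∀ a b : A, act h (a * b) = ∑ i : Fin m, act (h₁ i) a * act (h₂ i) b) ∧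
      (∀ a : A, μ h * a = ∑ i : Fin m, act (h₁ i) a * μ (h₂ i)))
    (hstable : ∀ (h : H) (x : A), x ∈ momentIdeal μ χ → act h x ∈ momentIdeal μ χ) :
    (∀ x y : A,
      (∀ h : H, act h x - Coalgebra.counit (R := k) h • x ∈ momentIdeal μ χ) →
      (∀ h : H, act h y - Coalgebra.counit (R := k) h • y ∈ momentIdeal μ χ) →
      ∀ h : H, act h (x * y) - Coalgebra.counit (R := k) h • (x * y) ∈ momentIdeal μ χ)
    ∧ (∀ x x' y y' : A,
      (∀ h : H, act h x - Coalgebra.counit (R := k) h • x ∈ momentIdeal μ χ) →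
      (∀ h : H, act h y - Coalgebra.counit (R := k) h • y ∈ momentIdeal μ χ) →
      x - x' ∈ momentIdeal μ χ → y - y' ∈ momentIdeal μ χ →
      x * y - x' * y' ∈ momentIdeal μ χ) :=
  quantum_hamiltonian_reduction_invariants_algebra_general act μ χ hsweedler hstable
end
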